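/- arXiv:1809.05772 — 2 statements merged into one kernel-verified Lean document; each statement's English description precedes it below -/
import Mathlib

section
/- Let A be a commutative C*-algebra. The Varopoulos algebra V_A = A ⊗_γ A is strongly Arens irregular if and only if A is finite-dimensional. -/
noncomputable section
open scoped ComplexOrder ENNReal NNReal InnerProductSpace
open NormedSpace Filter Topology ContinuousLinearMap

namespace Paper

/-- The dual of a complex normed space. -/
abbrev Dual' (E : Type*) [SeminormedAddCommGroup E] [NormedSpace ℂ E] : Type _ :=
  StrongDual ℂ E

/-- The bidual of a complex normed space. -/
abbrev Bidual (E : Type*) [SeminormedAddCommGroup E] [NormedSpace ℂ E] : Type _ :=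
  StrongDual ℂ (StrongDual ℂ E)

section Arens

variable {A : Type*} [NonUnitalNormedRing A] [NormedSpace ℂ A]
  [IsScalarTower ℂ A A] [SMulCommClass ℂ A A]

/-- The map `f ↦ (a ↦ f □ a)`, where `⟨f □ a, b⟩ = ⟨f, a * b⟩`. -/
def fBoxL : Dual' A →L[ℂ] A →L[ℂ] Dual' A :=
  ((ContinuousLinearMap.compL ℂ A (A →L[ℂ] A) (A →L[ℂ] ℂ)).flip
      (ContinuousLinearMap.mul ℂ A)).comp (ContinuousLinearMap.compL ℂ A A ℂ)

@[simp] lemma fBoxL_apply (f : Dual' A) (a b : A) : fBoxL f a b = f (a * b) := rfl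

/-- The map `f ↦ Y □ f`, where `⟨Y □ f, a⟩ = ⟨Y, f □ a⟩`. -/
def boxDual (Y : Bidual A) : Dual' A →L[ℂ] Dual' A :=
  (ContinuousLinearMap.compL ℂ A (Dual' A) ℂ Y).comp fBoxL

@[simp] lemma boxDual_apply (Y : Bidual A) (f : Dual' A) (a : A) :
    boxDual Y f a = Y (fBoxL f a) := rfl

/-- The left Arens product `X □ Y` on the bidual of a Banach algebra. -/
def arens (X Y : Bidual A) : Bidual A := X.comp (boxDual Y)

@[simp] lemma arens_apply (X Y : Bidual A) (f : Dual' A) : arens X Y f = X (boxDual Y f) := rfl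

end Arens

/-- A map between duals is `w*`-`w*`-continuous. -/
def WStarContinuous {E F : Type*} [NormedAddCommGroup E] [NormedSpace ℂ E]
    [NormedAddCommGroup F] [NormedSpace ℂ F] (Φ : Dual' E → Dual' F) : Prop :=
  Continuous fun x : WeakDual ℂ E =>
    StrongDual.toWeakDual (Φ (WeakDual.toStrongDual x))

section Centre

variable (A : Type*) [NonUnitalNormedRing A] [NormedSpace ℂ A]
  [IsScalarTower ℂ A A] [SMulCommClass ℂ A A]

/-- The left topological centre of the bidual of a Banach algebra, with the Arens product. -/
def topCentre : Set (Bidual A) :=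
  {X | WStarContinuous (fun Y : Dual' (Dual' A) => arens X Y)}

/-- A Banach algebra is Arens regular if the topological centre of its bidual is everything. -/
def ArensRegular : Prop := topCentre A = Set.univ

/-- A Banach algebra is (left) strongly Arens irregular if the topological centre of its
bidual is the canonical image of the algebra itself. -/
def StronglyArensIrregular : Prop :=
  topCentre A = Set.range (NormedSpace.inclusionInDoubleDual ℂ A)

end Centre


section Tensor

variable (A B V : Type*) [NormedAddCommGroup A] [NormedSpace ℂ A]
  [NormedAddCommGroup B] [NormedSpace ℂ B] [NormedAddCommGroup V] [NormedSpace ℂ V]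

/-- `t : A × B → V` realizes `V` as the projective Banach space tensor product `A ⊗_γ B`:
`t` is contractive as a bilinear map, has total range, and every bounded bilinear form on
`A × B` factors through `V` with the same norm.  These properties determine `A ⊗_γ B`
up to canonical isometric isomorphism. -/
structure IsProjectiveTensorProduct (t : A →L[ℂ] B →L[ℂ] V) : Prop where
  complete : CompleteSpace V
  norm_le : ∀ a b, ‖t a b‖ ≤ ‖a‖ * ‖b‖
  dense : Dense (Submodule.span ℂ (Set.range fun p : A × B => t p.1 p.2) : Set V)
  lift : ∀ φ : A →L[ℂ] B →L[ℂ] ℂ, ∃ T : StrongDual ℂ V,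
    ‖T‖ ≤ ‖φ‖ ∧ ∀ a b, T (t a b) = φ a b

end Tensor

section Haagerup

variable (A B V : Type*) [NonUnitalNormedRing A] [StarRing A] [NormedSpace ℂ A]
  [NonUnitalNormedRing B] [StarRing B] [NormedSpace ℂ B]
  [NormedAddCommGroup V] [NormedSpace ℂ V]

/-- `t : A × B → V` realizes `V` as the Haagerup tensor product `A ⊗_h B` of the
C⋆-algebras `A` and `B`: the defining estimate
`‖∑ aₖ ⊗ bₖ‖ ≤ ‖∑ aₖaₖ*‖^(1/2) ‖∑ bₖ*bₖ‖^(1/2)` holds, the range of `t` is total, and every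
bilinear form satisfying the corresponding Haagerup estimate factors through `V` with the
same bound.  These properties determine `A ⊗_h B` up to canonical isometric isomorphism. -/
structure IsHaagerupTensorProduct (t : A →L[ℂ] B →L[ℂ] V) : Prop where
  complete : CompleteSpace V
  hnorm_le : ∀ (n : ℕ) (a : Fin n → A) (b : Fin n → B),
    ‖∑ k, t (a k) (b k)‖ ≤
      Real.sqrt ‖∑ k, a k * star (a k)‖ * Real.sqrt ‖∑ k, star (b k) * b k‖
  dense : Dense (Submodule.span ℂ (Set.range fun p : A × B => t p.1 p.2) : Set V)
  lift : ∀ (φ : A →L[ℂ] B →L[ℂ] ℂ) (C : ℝ),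
    (∀ (n : ℕ) (a : Fin n → A) (b : Fin n → B),
      ‖∑ k, φ (a k) (b k)‖ ≤
        C * (Real.sqrt ‖∑ k, a k * star (a k)‖ * Real.sqrt ‖∑ k, star (b k) * b k‖)) →
    ∃ T : StrongDual ℂ V, ‖T‖ ≤ C ∧ ∀ a b, T (t a b) = φ a b

/-- `t : A × B → V` realizes `V` as the Haagerup tensor product `A ⊗_h B^op` of the
C⋆-algebra `A` with the opposite of the C⋆-algebra `B` (written without passing through
`Bᵐᵒᵖ`: in `B^op` one has `∑ bₖ*bₖ = ∑ bₖ ⬝ star bₖ` computed in `B`). -/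
structure IsHaagerupTensorProductOp (t : A →L[ℂ] B →L[ℂ] V) : Prop where
  complete : CompleteSpace V
  hnorm_le : ∀ (n : ℕ) (a : Fin n → A) (b : Fin n → B),
    ‖∑ k, t (a k) (b k)‖ ≤
      Real.sqrt ‖∑ k, a k * star (a k)‖ * Real.sqrt ‖∑ k, b k * star (b k)‖
  dense : Dense (Submodule.span ℂ (Set.range fun p : A × B => t p.1 p.2) : Set V)
  lift : ∀ (φ : A →L[ℂ] B →L[ℂ] ℂ) (C : ℝ),
    (∀ (n : ℕ) (a : Fin n → A) (b : Fin n → B),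
      ‖∑ k, φ (a k) (b k)‖ ≤
        C * (Real.sqrt ‖∑ k, a k * star (a k)‖ * Real.sqrt ‖∑ k, b k * star (b k)‖)) →
    ∃ T : StrongDual ℂ V, ‖T‖ ≤ C ∧ ∀ a b, T (t a b) = φ a b

end Haagerup

section DualMaps

variable {E F : Type*} [NormedAddCommGroup E] [NormedSpace ℂ E]
  [NormedAddCommGroup F] [NormedSpace ℂ F]

/-- The Banach space adjoint of a bounded linear map. -/
def dualMap (φ : E →L[ℂ] F) : StrongDual ℂ F →L[ℂ] StrongDual ℂ E :=
  (ContinuousLinearMap.compL ℂ E F ℂ).flip φ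

@[simp] lemma dualMap_apply (φ : E →L[ℂ] F) (ψ : StrongDual ℂ F) (x : E) :
    dualMap φ ψ x = ψ (φ x) := rfl

/-- The second Banach space adjoint `φ** : E** → F**` of a bounded linear map. -/
def bidualMap (φ : E →L[ℂ] F) : Bidual E →L[ℂ] Bidual F := dualMap (dualMap φ)

end DualMaps

section Geometry

variable (A : Type*) [NonUnitalNormedRing A] [StarRing A] [NormedSpace ℂ A]

/-- A positive functional on a C⋆-algebra. -/
def IsPositiveFunctional (f : StrongDual ℂ A) : Prop := ∀ a : A, 0 ≤ f (star a * a)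

/-- A pure functional on a C⋆-algebra: a nonzero positive functional such that every
positive functional it dominates is a scalar multiple of it. -/
def IsPureFunctional (f : StrongDual ℂ A) : Prop :=
  IsPositiveFunctional A f ∧ f ≠ 0 ∧
    ∀ g : StrongDual ℂ A, IsPositiveFunctional A g → IsPositiveFunctional A (f - g) →
      ∃ c : ℝ, g = (c : ℂ) • f

/-- A C⋆-algebra is scattered if every positive functional is a finite or countable
pointwise sum of pure functionals. -/
def Scattered : Prop :=
  ∀ f : StrongDual ℂ A, IsPositiveFunctional A f →
    ∃ g : ℕ → StrongDual ℂ A,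
      (∀ n, IsPureFunctional A (g n) ∨ g n = 0) ∧ ∀ a : A, HasSum (fun n => g n a) (f a)

end Geometry

section BanachProps

variable (E : Type*) [NormedAddCommGroup E] [NormedSpace ℂ E]

/-- The Dunford–Pettis property: `⟨fₙ, xₙ⟩ → 0` for all weakly null sequences `xₙ` in `E`
and `fₙ` in `E*`. -/
def DunfordPettisProperty : Prop :=
  ∀ (x : ℕ → E) (f : ℕ → StrongDual ℂ E),
    (∀ φ : StrongDual ℂ E, Tendsto (fun n => φ (x n)) atTop (𝓝 0)) →
    (∀ Ψ : Bidual E, Tendsto (fun n => Ψ (f n)) atTop (𝓝 0)) →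
    Tendsto (fun n => f n (x n)) atTop (𝓝 0)

/-- The Schur property: weakly convergent sequences are norm convergent. -/
def SchurProperty : Prop :=
  ∀ (x : ℕ → E) (x₀ : E),
    (∀ φ : StrongDual ℂ E, Tendsto (fun n => φ (x n)) atTop (𝓝 (φ x₀))) →
    Tendsto x atTop (𝓝 x₀)

/-- The Phillips property: the Dixmier projection `E*** → E*` (restriction along the
canonical embedding `E → E**`) is sequentially `w*`-to-norm continuous. -/
def PhillipsProperty : Prop :=
  ∀ (Ξ : ℕ → StrongDual ℂ (Bidual E)) (Ξ₀ : StrongDual ℂ (Bidual E)),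
    (∀ X : Bidual E, Tendsto (fun n => Ξ n X) atTop (𝓝 (Ξ₀ X))) →
    Tendsto (fun n =>
      ‖(Ξ n).comp (NormedSpace.inclusionInDoubleDual ℂ E) -
        Ξ₀.comp (NormedSpace.inclusionInDoubleDual ℂ E)‖) atTop (𝓝 0)

/-- A weakly unconditionally Cauchy series in `E`. -/
def IsWUC (x : ℕ → E) : Prop :=
  ∀ ψ : StrongDual ℂ E, Summable fun n => ‖ψ (x n)‖

/-- Pelczynski's property (V). -/
def PelczynskiPropertyV : Prop :=
  ∀ K : Set (StrongDual ℂ E),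
    (∀ x : ℕ → E, IsWUC E x →
      Tendsto (fun n => ⨆ ψ ∈ K, (‖ψ (x n)‖₊ : ℝ≥0∞)) atTop (𝓝 0)) →
    IsCompact (closure ((fun ψ : StrongDual ℂ E =>
      (ψ : WeakSpace ℂ (StrongDual ℂ E))) '' K))

/-- Weak sequential completeness. -/
def WeaklySequentiallyComplete : Prop :=
  ∀ x : ℕ → E, (∀ φ : StrongDual ℂ E, CauchySeq fun n => φ (x n)) →
    ∃ x₀ : E, ∀ φ : StrongDual ℂ E,
      Tendsto (fun n => φ (x n)) atTop (𝓝 (φ x₀))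

end BanachProps


section SigmaWeak

variable (K H : Type*) [NormedAddCommGroup H] [InnerProductSpace ℂ H]
  [NormedAddCommGroup K] [InnerProductSpace ℂ K]

/-- The σ-weak (i.e. weak*) topology on `B(K, H)`: the coarsest topology making all
functionals `T ↦ ∑ₙ ⟪xₙ, T yₙ⟫` continuous, for `ℓ²`-summable sequences `(xₙ) ⊆ H`,
`(yₙ) ⊆ K`. -/
def sigmaWeak : TopologicalSpace (K →L[ℂ] H) :=
  ⨆ (x : ℕ → H) (y : ℕ → K) (_ : Summable fun n => ‖x n‖ ^ 2)
    (_ : Summable fun n => ‖y n‖ ^ 2),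
    TopologicalSpace.induced (fun T : K →L[ℂ] H => ∑' n, (⟪x n, T (y n)⟫_ℂ)) inferInstance

end SigmaWeak

section Amplification

variable {K H : Type*} [NormedAddCommGroup H] [InnerProductSpace ℂ H] [CompleteSpace H]
  [NormedAddCommGroup K] [InnerProductSpace ℂ K] [CompleteSpace K]

/-- The `n`-fold Hilbertian direct sum of a Hilbert space. -/
abbrev hilbertPow (n : ℕ) (H : Type*) [NormedAddCommGroup H] [InnerProductSpace ℂ H] :=
  PiLp 2 (fun _ : Fin n => H)

/-- Coordinate projection of the `n`-fold direct sum. -/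
def hProj (n : ℕ) (i : Fin n) : hilbertPow n H →L[ℂ] H :=
  (ContinuousLinearMap.proj i).comp
    (PiLp.continuousLinearEquiv 2 ℂ (fun _ : Fin n => H)).toContinuousLinearMap

/-- Coordinate inclusion into the `n`-fold direct sum. -/
def hIncl (n : ℕ) (i : Fin n) : H →L[ℂ] hilbertPow n H :=
  ((PiLp.continuousLinearEquiv 2 ℂ (fun _ : Fin n => H)).symm).toContinuousLinearMap.comp
    (ContinuousLinearMap.pi fun j => if j = i then ContinuousLinearMap.id ℂ H else 0)

/-- The `n`-th matrix amplification of a linear map `Φ` on `B(K, H)`, acting on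
`B(Kⁿ, Hⁿ) = Mₙ(B(K, H))` entrywise. -/
def ampl (Φ : (K →L[ℂ] H) → (K →L[ℂ] H)) (n : ℕ)
    (T : hilbertPow n K →L[ℂ] hilbertPow n H) : hilbertPow n K →L[ℂ] hilbertPow n H :=
  ∑ i, ∑ j, (hIncl n i).comp ((Φ ((hProj n i).comp (T.comp (hIncl n j)))).comp (hProj n j))

/-- A map on `B(K, H)` is completely bounded if its matrix amplifications are
uniformly bounded. -/
def CompletelyBounded (Φ : (K →L[ℂ] H) → (K →L[ℂ] H)) : Prop :=
  ∃ C : ℝ, ∀ (n : ℕ) (T : hilbertPow n K →L[ℂ] hilbertPow n H), ‖ampl Φ n T‖ ≤ C * ‖T‖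

/-- The completely bounded norm of a map on `B(K, H)`. -/
def cbNorm (Φ : (K →L[ℂ] H) → (K →L[ℂ] H)) : ℝ :=
  sInf {C : ℝ | 0 ≤ C ∧ ∀ (n : ℕ) (T : hilbertPow n K →L[ℂ] hilbertPow n H),
    ‖ampl Φ n T‖ ≤ C * ‖T‖}

end Amplification


universe u v

section Aux


variable {A : Type*} [NonUnitalCommCStarAlgebra A]

lemma norm_sq_of_sa {p : A} (hp : star p = p) : ‖p * p‖ = ‖p‖ * ‖p‖ := by
  nth_rewrite 2 [← hp]
  exact CStarRing.norm_self_mul_star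

lemma pow_est : ∀ (m : ℕ) (p q : A), star p = p → star q = q → p * q = 0 →
    ‖p + q‖ ^ (2 ^ m) ≤ ‖p‖ ^ (2 ^ m) + ‖q‖ ^ (2 ^ m) := by
  intro m
  induction m with
  | zero => intro p q _ _ _; simpa using norm_add_le p q
  | succ m ih =>
    intro p q hp hq hpq
    have hqp : q * p = 0 := by rw [mul_comm]; exact hpq
    have hsq : (p + q) * (p + q) = p * p + q * q := by
      rw [add_mul, mul_add, mul_add, hpq, hqp]; abel
    have hpp : star (p * p) = p * p := by rw [star_mul, hp, mul_comm]
    have hqq : star (q * q) = q * q := by rw [star_mul, hq, mul_comm]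
    have horth : (p * p) * (q * q) = 0 := by
      rw [mul_assoc, ← mul_assoc p q, hpq, zero_mul, mul_zero]
    have hsum_sa : star (p + q) = p + q := by rw [star_add, hp, hq]
    have hnorm_sq : ‖p + q‖ ^ 2 = ‖p * p + q * q‖ := by
      rw [← hsq, norm_sq_of_sa hsum_sa, sq]
    have e1 : ∀ r : ℝ, r ^ (2 ^ (m + 1)) = (r ^ 2) ^ (2 ^ m) := by
      intro r; rw [← pow_mul, pow_succ, mul_comm]
    calc ‖p + q‖ ^ (2 ^ (m + 1)) = (‖p + q‖ ^ 2) ^ (2 ^ m) := e1 _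
      _ = ‖p * p + q * q‖ ^ (2 ^ m) := by rw [hnorm_sq]
      _ ≤ ‖p * p‖ ^ (2 ^ m) + ‖q * q‖ ^ (2 ^ m) := ih _ _ hpp hqq horth
      _ = ‖p‖ ^ (2 ^ (m+1)) + ‖q‖ ^ (2 ^ (m+1)) := by
          rw [norm_sq_of_sa hp, norm_sq_of_sa hq, ← sq, ← sq, e1, e1]

lemma pair_norm_le {p q : A} (hp : star p = p) (hq : star q = q) (hpq : p * q = 0)
    (hp1 : ‖p‖ ≤ 1) (hq1 : ‖q‖ ≤ 1) : ‖p + q‖ ≤ 1 := by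
  by_contra h
  push_neg at h
  obtain ⟨m, hm⟩ := pow_unbounded_of_one_lt (2 : ℝ) h
  have h1 : ‖p + q‖ ^ m ≤ ‖p + q‖ ^ (2 ^ m) :=
    pow_le_pow_right₀ (le_of_lt h) (Nat.lt_two_pow_self (n := m)).le
  have h2 := pow_est m p q hp hq hpq
  have h3 : ‖p‖ ^ (2 ^ m) ≤ 1 := pow_le_one₀ (norm_nonneg _) hp1
  have h4 : ‖q‖ ^ (2 ^ m) ≤ 1 := pow_le_one₀ (norm_nonneg _) hq1
  linarith

lemma orth_sum_norm_le : ∀ (n : ℕ) (y : Fin n → A), (∀ i, star (y i) = y i) →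
    (∀ i j, i ≠ j → y i * y j = 0) → (∀ i, ‖y i‖ ≤ 1) → ‖∑ i, y i‖ ≤ 1 := by
  intro n
  induction n with
  | zero => intro y _ _ _; simp
  | succ n ih =>
    intro y hsa horth h1
    rw [Fin.sum_univ_succ]
    have hrest : ‖∑ i : Fin n, y i.succ‖ ≤ 1 :=
      ih (fun i => y i.succ) (fun i => hsa _)
        (fun i j hij => horth _ _ (by simpa using hij)) (fun i => h1 _)
    refine pair_norm_le (hsa 0) ?_ ?_ (h1 0) hrest
    · rw [star_sum]
      exact Finset.sum_congr rfl fun i _ => hsa _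
    · rw [Finset.mul_sum]
      refine Finset.sum_eq_zero fun i _ => horth _ _ ?_
      exact (Fin.succ_ne_zero i).symm

/-- Key C*-norm bound: a sum of "disjoint" elements has norm at most the max. -/
lemma disjoint_sum_norm_le (n : ℕ) (w : Fin n → A)
    (horth : ∀ i j, i ≠ j → w i * star (w j) = 0) (h1 : ∀ i, ‖w i‖ ≤ 1) :
    ‖∑ i, w i‖ ≤ 1 := by
  set z := ∑ i, w i with hz
  have hzz : z * star z = ∑ i, w i * star (w i) := by
    rw [hz, star_sum, Finset.sum_mul_sum]
    refine Finset.sum_congr rfl fun i _ => ?_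
    exact Finset.sum_eq_single i (fun j _ hj => horth i j (Ne.symm hj))
      (by simp)
  have hbound : ‖z * star z‖ ≤ 1 := by
    rw [hzz]
    refine orth_sum_norm_le n _ (fun i => ?_) (fun i j hij => ?_) (fun i => ?_)
    · rw [star_mul, star_star, mul_comm]
    · have e : (w i * star (w i)) * (w j * star (w j))
          = (w i * star (w j)) * (w j * star (w i)) := by
        rw [mul_mul_mul_comm, mul_comm (star (w i)) (star (w j)), mul_mul_mul_comm]
      rw [e, horth i j hij, zero_mul]
    · rw [CStarRing.norm_self_mul_star]
      have := h1 i
      nlinarith [norm_nonneg (w i)]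
  have : ‖z‖ * ‖z‖ ≤ 1 := by rwa [← CStarRing.norm_self_mul_star]
  nlinarith [norm_nonneg z]



def sg (b : Bool) : ℂ := if b then 1 else -1

@[simp] lemma sg_norm (b : Bool) : ‖sg b‖ = 1 := by cases b <;> simp [sg]

lemma sg_mul_self (b : Bool) : sg b * sg b = 1 := by cases b <;> simp [sg]

lemma sg_not (b : Bool) : sg (!b) = - sg b := by cases b <;> simp [sg]

lemma sum_sg_orth (n : ℕ) (i j : Fin n) :
    ∑ ε : Fin n → Bool, sg (ε i) * sg (ε j) = if i = j then ((2:ℂ)^n) else 0 := by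
  rcases eq_or_ne i j with rfl | hij
  · rw [if_pos rfl]
    have : ∀ ε : Fin n → Bool, sg (ε i) * sg (ε i) = 1 := fun ε => sg_mul_self _
    rw [Finset.sum_congr rfl (fun ε _ => this ε), Finset.sum_const, Finset.card_univ,
      Fintype.card_fun]
    simp
  · rw [if_neg hij]
    refine Finset.sum_involution
      (fun ε _ => Function.update ε i (!(ε i))) (fun ε _ => ?_) (fun ε _ hne => ?_)
      (fun ε _ => Finset.mem_univ _) (fun ε _ => ?_)
    · rw [Function.update_self, Function.update_of_ne (Ne.symm hij), sg_not]
      ring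
    · intro heq
      have h2 := congrFun heq i
      rw [Function.update_self] at h2
      exact (Bool.not_ne_self (ε i)) h2
    · ext k
      rcases eq_or_ne k i with rfl | hk
      · rw [Function.update_self, Function.update_self, Bool.not_not]
      · rw [Function.update_of_ne hk, Function.update_of_ne hk]

variable {A : Type*} [NonUnitalCommCStarAlgebra A]
  {V : Type*} [NormedAddCommGroup V] [NormedSpace ℂ V]

variable {V : Type*} [NormedAddCommGroup V] [NormedSpace ℂ V]

-- bilinear expansion
lemma t_expand {A : Type*} [NormedAddCommGroup A] [NormedSpace ℂ A]
    {V : Type*} [NormedAddCommGroup V] [NormedSpace ℂ V]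
    (t : A →L[ℂ] A →L[ℂ] V) {n : ℕ} (α β : Fin n → ℂ) (x y : Fin n → A) :
    t (∑ i, α i • x i) (∑ j, β j • y j)
      = ∑ i, ∑ j, (α i * β j) • t (x i) (y j) := by
  have h1 : t (∑ i, α i • x i) = ∑ i, α i • t (x i) := by
    rw [map_sum]
    exact Finset.sum_congr rfl fun i _ => map_smul t _ _
  rw [h1, ContinuousLinearMap.sum_apply]
  refine Finset.sum_congr rfl fun i _ => ?_
  rw [ContinuousLinearMap.smul_apply, map_sum, Finset.smul_sum]
  refine Finset.sum_congr rfl fun j _ => ?_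
  rw [map_smul, smul_smul]



lemma smul_orth {n : ℕ} (c d : Fin n → ℂ) (x : Fin n → A)
    (hx : ∀ i j, i ≠ j → x i * star (x j) = 0) :
    ∀ i j, i ≠ j → (c i • x i) * star (d j • x j) = 0 := by
  intro i j hij
  rw [star_smul, smul_mul_assoc, mul_smul_comm, hx i j hij, smul_zero, smul_zero]

lemma key_est (t : A →L[ℂ] A →L[ℂ] V) (hb : ∀ a b, ‖t a b‖ ≤ ‖a‖ * ‖b‖)
    {n : ℕ} (x y : Fin n → A) (θ : Fin n → ℂ)
    (hx : ∀ i j, i ≠ j → x i * star (x j) = 0)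
    (hy : ∀ i j, i ≠ j → y i * star (y j) = 0)
    (hx1 : ∀ i, ‖x i‖ ≤ 1) (hy1 : ∀ i, ‖y i‖ ≤ 1) (hθ : ∀ i, ‖θ i‖ ≤ 1) :
    ‖∑ i, θ i • t (x i) (y i)‖ ≤ 1 := by
  classical
  set T := ∑ i, θ i • t (x i) (y i) with hT
  set S := ∑ ε : Fin n → Bool,
    t (∑ i, sg (ε i) • x i) (∑ j, (sg (ε j) * θ j) • y j) with hS
  have hid : S = (2:ℂ)^n • T := by
    calc S = ∑ ε : Fin n → Bool, ∑ i, ∑ j,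
          ((sg (ε i) * sg (ε j)) * θ j) • t (x i) (y j) := by
          refine Finset.sum_congr rfl fun ε _ => ?_
          rw [t_expand]
          exact Finset.sum_congr rfl fun i _ =>
            Finset.sum_congr rfl fun j _ => by rw [mul_assoc]
      _ = ∑ i, ∑ j, ∑ ε : Fin n → Bool,
          ((sg (ε i) * sg (ε j)) * θ j) • t (x i) (y j) := by
          rw [Finset.sum_comm]
          exact Finset.sum_congr rfl fun i _ => Finset.sum_comm
      _ = ∑ i, ∑ j, ((∑ ε : Fin n → Bool, sg (ε i) * sg (ε j)) * θ j)
            • t (x i) (y j) := by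
          refine Finset.sum_congr rfl fun i _ => Finset.sum_congr rfl fun j _ => ?_
          rw [← Finset.sum_smul, ← Finset.sum_mul]
      _ = ∑ i, (((2:ℂ)^n) * θ i) • t (x i) (y i) := by
          refine Finset.sum_congr rfl fun i _ => ?_
          rw [Finset.sum_eq_single i (fun j _ hj => ?_) (fun h => absurd (Finset.mem_univ i) h)]
          · rw [sum_sg_orth, if_pos rfl]
          · rw [sum_sg_orth, if_neg (Ne.symm hj), zero_mul, zero_smul]
      _ = (2:ℂ)^n • T := by
          rw [hT, Finset.smul_sum]
          exact Finset.sum_congr rfl fun i _ => (smul_smul _ _ _).symm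
  have hSnorm : ‖S‖ ≤ (2:ℝ)^n := by
    have hterm : ∀ ε : Fin n → Bool,
        ‖t (∑ i, sg (ε i) • x i) (∑ j, (sg (ε j) * θ j) • y j)‖ ≤ 1 := by
      intro ε
      have h1 : ‖∑ i, sg (ε i) • x i‖ ≤ 1 := by
        refine disjoint_sum_norm_le n _ (smul_orth _ _ x hx) fun i => ?_
        rw [norm_smul, sg_norm, one_mul]; exact hx1 i
      have h2 : ‖∑ j, (sg (ε j) * θ j) • y j‖ ≤ 1 := by
        refine disjoint_sum_norm_le n _ (smul_orth _ _ y hy) fun j => ?_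
        rw [norm_smul, norm_mul, sg_norm, one_mul]
        exact mul_le_one₀ (hθ j) (norm_nonneg _) (hy1 j)
      calc ‖t (∑ i, sg (ε i) • x i) (∑ j, (sg (ε j) * θ j) • y j)‖
          ≤ ‖∑ i, sg (ε i) • x i‖ * ‖∑ j, (sg (ε j) * θ j) • y j‖ := hb _ _
        _ ≤ 1 := mul_le_one₀ h1 (norm_nonneg _) h2
    calc ‖S‖ ≤ ∑ ε : Fin n → Bool, ‖t (∑ i, sg (ε i) • x i)
          (∑ j, (sg (ε j) * θ j) • y j)‖ := norm_sum_le _ _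
      _ ≤ ∑ _ε : Fin n → Bool, (1:ℝ) := Finset.sum_le_sum fun ε _ => hterm ε
      _ = (2:ℝ)^n := by
          rw [Finset.sum_const, Finset.card_univ, Fintype.card_fun]
          simp
  have h2n : ‖(2:ℂ)^n • T‖ = (2:ℝ)^n * ‖T‖ := by
    rw [norm_smul, norm_pow]
    norm_num
  rw [hid, h2n] at hSnorm
  have hpos : (0:ℝ) < 2^n := by positivity
  nlinarith

lemma exists_phase (z : ℂ) : ∃ θ : ℂ, ‖θ‖ = 1 ∧ θ * z = (‖z‖ : ℂ) := by
  rcases eq_or_ne z 0 with rfl | hz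
  · exact ⟨1, by simp, by simp⟩
  · refine ⟨(‖z‖ : ℂ) / z, ?_, by field_simp⟩
    rw [norm_div, Complex.norm_real, Real.norm_of_nonneg (norm_nonneg z),
      div_self (norm_ne_zero_iff.mpr hz)]

lemma opNorm_le_of_unit {E F : Type*} [NormedAddCommGroup E] [NormedSpace ℂ E]
    [NormedAddCommGroup F] [NormedSpace ℂ F] (T : E →L[ℂ] F) {M : ℝ} (hM : 0 ≤ M)
    (h : ∀ c : E, ‖c‖ ≤ 1 → ‖T c‖ ≤ M) : ‖T‖ ≤ M := by
  refine T.opNorm_le_bound hM fun x => ?_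
  rcases eq_or_ne x 0 with rfl | hx
  · simp
  · have hx' : (0:ℝ) < ‖x‖ := norm_pos_iff.mpr hx
    have h1 : ‖((‖x‖ : ℂ))⁻¹ • x‖ ≤ 1 := by
      rw [norm_smul, norm_inv, Complex.norm_real, Real.norm_of_nonneg (norm_nonneg x),
        inv_mul_cancel₀ hx'.ne']
    have h2 := h _ h1
    rw [map_smul, norm_smul, norm_inv, Complex.norm_real,
      Real.norm_of_nonneg (norm_nonneg x)] at h2
    calc ‖T x‖ = ‖x‖ * (‖x‖⁻¹ * ‖T x‖) := by field_simp
      _ ≤ ‖x‖ * M := mul_le_mul_of_nonneg_left h2 (norm_nonneg x)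
      _ = M * ‖x‖ := mul_comm _ _

section TensorAux

variable {A : Type*} [NormedAddCommGroup A] [NormedSpace ℂ A]
  {V : Type*} [NormedAddCommGroup V] [NormedSpace ℂ V]
  {t : A →L[ℂ] A →L[ℂ] V}

lemma IsProjectiveTensorProduct.dual_norm_le
    (htensor : IsProjectiveTensorProduct A A V t)
    (φ : Dual' V) {M : ℝ} (hM : 0 ≤ M)
    (h : ∀ c d : A, ‖c‖ ≤ 1 → ‖d‖ ≤ 1 → ‖φ (t c d)‖ ≤ M) : ‖φ‖ ≤ M := by
  set ψ : A →L[ℂ] A →L[ℂ] ℂ := ((ContinuousLinearMap.compL ℂ A V ℂ) φ).comp t with hψ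
  have hψ_apply : ∀ c d : A, ψ c d = φ (t c d) := fun c d => rfl
  have hψ_norm : ‖ψ‖ ≤ M := by
    refine opNorm_le_of_unit ψ hM fun c hc => ?_
    refine opNorm_le_of_unit (ψ c) hM fun d hd => ?_
    rw [hψ_apply]
    exact h c d hc hd
  obtain ⟨T, hT, hTt⟩ := htensor.lift ψ
  have hTφ : T = φ := by
    refine ContinuousLinearMap.ext_on htensor.dense ?_
    rintro z ⟨⟨a, b⟩, rfl⟩
    exact (hTt a b).trans (hψ_apply a b)
  calc ‖φ‖ = ‖T‖ := by rw [hTφ]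
    _ ≤ ‖ψ‖ := hT
    _ ≤ M := hψ_norm

lemma IsProjectiveTensorProduct.exists_unit_close
    (htensor : IsProjectiveTensorProduct A A V t)
    (φ : Dual' V) {ε : ℝ} (hε : 0 < ε) :
    ∃ c d : A, ‖c‖ ≤ 1 ∧ ‖d‖ ≤ 1 ∧ ‖φ‖ ≤ ‖φ (t c d)‖ + ε := by
  by_contra hcon
  push_neg at hcon
  have h00 := hcon 0 0 (by simp) (by simp)
  rw [map_zero, map_zero, norm_zero, zero_add] at h00
  have hM : (0:ℝ) ≤ ‖φ‖ - ε := by linarith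
  have := htensor.dual_norm_le φ hM fun c d hc hd => by
    have := hcon c d hc hd
    linarith
  linarith

end TensorAux

section MainConstruction

variable {A : Type*} [NonUnitalCommCStarAlgebra A]
  {V : Type*} [NonUnitalNormedRing V] [NormedSpace ℂ V]
  [IsScalarTower ℂ V V] [SMulCommClass ℂ V V]

/-- The core estimate: sums of values of a functional on "disjointly supported"
elementary tensors are absolutely bounded by the norm of the functional. -/
lemma sum_norm_apply_le (t : A →L[ℂ] A →L[ℂ] V)
    (hb : ∀ a b : A, ‖t a b‖ ≤ ‖a‖ * ‖b‖) (f : Dual' V) (N : ℕ)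
    (x y : ℕ → A)
    (hx : ∀ i j : ℕ, i ≠ j → x i * star (x j) = 0)
    (hy : ∀ i j : ℕ, i ≠ j → y i * star (y j) = 0)
    (hx1 : ∀ i, ‖x i‖ ≤ 1) (hy1 : ∀ i, ‖y i‖ ≤ 1) :
    ∑ k ∈ Finset.range N, ‖f (t (x k) (y k))‖ ≤ ‖f‖ := by
  have hphase : ∀ k : ℕ, ∃ θ : ℂ, ‖θ‖ = 1 ∧
      θ * f (t (x k) (y k)) = (‖f (t (x k) (y k))‖ : ℂ) := fun k => exists_phase _
  choose θ hθ1 hθ2 using hphase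
  have key : ‖∑ i : Fin N, θ i.val • t (x i.val) (y i.val)‖ ≤ 1 :=
    key_est t hb _ _ _
      (fun i j hij => hx _ _ (fun h => hij (Fin.ext h)))
      (fun i j hij => hy _ _ (fun h => hij (Fin.ext h)))
      (fun i => hx1 _) (fun i => hy1 _) (fun i => (hθ1 _).le)
  have e1 : f (∑ i : Fin N, θ i.val • t (x i.val) (y i.val))
      = ((∑ k ∈ Finset.range N, ‖f (t (x k) (y k))‖ : ℝ) : ℂ) := by
    rw [map_sum, Complex.ofReal_sum,
      ← Fin.sum_univ_eq_sum_range (fun k => ((‖f (t (x k) (y k))‖ : ℝ) : ℂ)) N]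
    refine Finset.sum_congr rfl fun i _ => ?_
    rw [map_smul, smul_eq_mul, hθ2]
  calc ∑ k ∈ Finset.range N, ‖f (t (x k) (y k))‖
      = ‖((∑ k ∈ Finset.range N, ‖f (t (x k) (y k))‖ : ℝ) : ℂ)‖ := by
        rw [Complex.norm_real,
          Real.norm_of_nonneg (Finset.sum_nonneg fun _ _ => norm_nonneg _)]
    _ = ‖f (∑ i : Fin N, θ i.val • t (x i.val) (y i.val))‖ := by rw [e1]
    _ ≤ ‖f‖ * ‖∑ i : Fin N, θ i.val • t (x i.val) (y i.val)‖ := f.le_opNorm _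
    _ ≤ ‖f‖ * 1 := mul_le_mul_of_nonneg_left key (norm_nonneg f)
    _ = ‖f‖ := mul_one _

theorem not_stronglyArensIrregular_of_orth_family
    (t : A →L[ℂ] A →L[ℂ] V)
    (htensor : IsProjectiveTensorProduct A A V t)
    (hmul : ∀ a b c d : A, t a b * t c d = t (a * c) (b * d))
    (u : ℕ → A) (χ : ℕ → (A →L[ℂ] ℂ))
    (hu_sa : ∀ k, star (u k) = u k)
    (hu_orth : ∀ j k, j ≠ k → u j * u k = 0)
    (hu_norm : ∀ k, ‖u k‖ ≤ 1)
    (hχ_val : ∀ m k, χ m (u k) = if k = m then 1 else 0)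
    (hχ_norm : ∀ m, ‖χ m‖ ≤ 1) :
    ¬ StronglyArensIrregular V := by
  classical
  haveI : CompleteSpace V := htensor.complete
  set v : ℕ → V := fun k => t (u k) (u k) with hv_def
  have hb := htensor.norm_le
  have hu_star_orth : ∀ i j : ℕ, i ≠ j → u i * star (u j) = 0 := by
    intro i j hij; rw [hu_sa]; exact hu_orth i j hij
  -- (L2) scalar summability
  have hpartial : ∀ (φ : Dual' V) (N : ℕ),
      ∑ k ∈ Finset.range N, ‖φ (v k)‖ ≤ ‖φ‖ := fun φ N =>
    sum_norm_apply_le t hb φ N u u hu_star_orth hu_star_orth hu_norm hu_norm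
  have hsum_norm : ∀ φ : Dual' V, Summable fun k => ‖φ (v k)‖ := fun φ =>
    summable_of_sum_range_le (fun k => norm_nonneg _) (hpartial φ)
  have hsum : ∀ φ : Dual' V, Summable fun k => φ (v k) := fun φ =>
    (hsum_norm φ).of_norm
  have htsum_le : ∀ φ : Dual' V, (∑' k, ‖φ (v k)‖) ≤ ‖φ‖ := fun φ =>
    Summable.tsum_le_of_sum_range_le (hsum_norm φ) (hpartial φ)
  -- the centre element X
  set Xlin : Dual' V →ₗ[ℂ] ℂ :=
    { toFun := fun φ => ∑' k, φ (v k)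
      map_add' := fun φ₁ φ₂ => by
        simp only [ContinuousLinearMap.add_apply]
        exact Summable.tsum_add (hsum φ₁) (hsum φ₂)
      map_smul' := fun c φ => by
        simp only [ContinuousLinearMap.coe_smul', Pi.smul_apply, smul_eq_mul,
          RingHom.id_apply]
        exact tsum_mul_left } with hXlin
  have hXbound : ∀ φ : Dual' V, ‖Xlin φ‖ ≤ 1 * ‖φ‖ := by
    intro φ
    rw [one_mul]
    calc ‖Xlin φ‖ ≤ ∑' k, ‖φ (v k)‖ := norm_tsum_le_tsum_norm (hsum_norm φ)
      _ ≤ ‖φ‖ := htsum_le φ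
  set X : Bidual V := Xlin.mkContinuous 1 hXbound with hX
  have hX_apply : ∀ φ : Dual' V, X φ = ∑' k, φ (v k) := fun φ => rfl
  -- (L1) operator summability
  have hop_partial : ∀ (f : Dual' V) (N : ℕ),
      ∑ k ∈ Finset.range N, ‖fBoxL f (v k)‖ ≤ ‖f‖ := by
    intro f N
    refine le_of_forall_pos_le_add fun ε hε => ?_
    rcases Nat.eq_zero_or_pos N with rfl | hN
    · simp [norm_nonneg, le_add_of_nonneg_of_le (norm_nonneg f) hε.le]
    have hεN : (0:ℝ) < ε / N := div_pos hε (by exact_mod_cast hN)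
    have hchoose : ∀ k : ℕ, ∃ c d : A, ‖c‖ ≤ 1 ∧ ‖d‖ ≤ 1 ∧
        ‖fBoxL f (v k)‖ ≤ ‖(fBoxL f (v k)) (t c d)‖ + ε / N := fun k =>
      htensor.exists_unit_close _ hεN
    choose c d hc hd hval using hchoose
    have happ : ∀ k, (fBoxL f (v k)) (t (c k) (d k))
        = f (t (u k * c k) (u k * d k)) := by
      intro k
      rw [fBoxL_apply, hv_def]
      rw [hmul]
    have hxorth : ∀ i j : ℕ, i ≠ j → (u i * c i) * star (u j * c j) = 0 := by
      intro i j hij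
      rw [star_mul, hu_sa, mul_comm (star (c j)) (u j), mul_mul_mul_comm,
        hu_orth i j hij, zero_mul]
    have hyorth : ∀ i j : ℕ, i ≠ j → (u i * d i) * star (u j * d j) = 0 := by
      intro i j hij
      rw [star_mul, hu_sa, mul_comm (star (d j)) (u j), mul_mul_mul_comm,
        hu_orth i j hij, zero_mul]
    have hx1 : ∀ i, ‖u i * c i‖ ≤ 1 := fun i =>
      (norm_mul_le _ _).trans (mul_le_one₀ (hu_norm i) (norm_nonneg _) (hc i))
    have hy1 : ∀ i, ‖u i * d i‖ ≤ 1 := fun i =>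
      (norm_mul_le _ _).trans (mul_le_one₀ (hu_norm i) (norm_nonneg _) (hd i))
    calc ∑ k ∈ Finset.range N, ‖fBoxL f (v k)‖
        ≤ ∑ k ∈ Finset.range N,
            (‖f (t (u k * c k) (u k * d k))‖ + ε / N) := by
          refine Finset.sum_le_sum fun k _ => ?_
          rw [← happ k]
          exact hval k
      _ = (∑ k ∈ Finset.range N, ‖f (t (u k * c k) (u k * d k))‖) + N * (ε / N) := by
          rw [Finset.sum_add_distrib, Finset.sum_const, Finset.card_range,
            nsmul_eq_mul]
      _ ≤ ‖f‖ + ε := by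
          have h1 := sum_norm_apply_le t hb f N _ _ hxorth hyorth hx1 hy1
          have h2 : (N:ℝ) * (ε / N) = ε := by
            field_simp
          linarith
  have hop_sum : ∀ f : Dual' V, Summable fun k => fBoxL f (v k) := fun f =>
    Summable.of_norm (summable_of_sum_range_le (fun k => norm_nonneg _)
      (hop_partial f))
  set g : Dual' V → Dual' V := fun f => ∑' k, fBoxL f (v k) with hg
  -- X is in the topological centre
  have harens : ∀ (Y : Bidual V) (f : Dual' V), arens X Y f = Y (g f) := by
    intro Y f
    rw [arens_apply, hX_apply]
    have h1 : ∀ k, (boxDual Y f) (v k) = Y (fBoxL f (v k)) := fun k =>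
      boxDual_apply Y f (v k)
    have h2 : HasSum (fun k => Y (fBoxL f (v k))) (Y (g f)) :=
      Y.hasSum (hop_sum f).hasSum
    rw [tsum_congr h1, h2.tsum_eq]
  have hX_mem : X ∈ topCentre V := by
    refine WeakBilin.continuous_of_continuous_eval _ fun f => ?_
    have : ∀ Y : WeakDual ℂ (Dual' V),
        arens X (WeakDual.toStrongDual Y) f = (WeakDual.toStrongDual Y) (g f) :=
      fun Y => harens _ f
    exact (WeakBilin.eval_continuous _ (g f)).congr fun Y => (this Y).symm
  -- X is not in the range of the canonical embedding
  have hX_not : X ∉ Set.range (NormedSpace.inclusionInDoubleDual ℂ V) := by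
    rintro ⟨w, hw⟩
    have hfw : ∀ f : Dual' V, f w = ∑' k, f (v k) := by
      intro f
      have := congrArg (fun Z : Bidual V => Z f) hw
      simpa [NormedSpace.dual_def, hX_apply] using this
    -- the functionals T m
    have hTm : ∀ m : ℕ, ∃ T : Dual' V, ‖T‖ ≤ 1 ∧
        ∀ a b : A, T (t a b) = χ m a * χ m b := by
      intro m
      obtain ⟨T, h1, h2⟩ := htensor.lift ((χ m).smulRight (χ m))
      refine ⟨T, h1.trans ?_, fun a b => (h2 a b).trans ?_⟩
      · rw [ContinuousLinearMap.norm_smulRight_apply]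
        exact mul_le_one₀ (hχ_norm m) (norm_nonneg _) (hχ_norm m)
      · rw [ContinuousLinearMap.smulRight_apply]
        simp [ContinuousLinearMap.smul_apply]
    choose T hT1 hT2 using hTm
    have hTv : ∀ m k, T m (v k) = if k = m then 1 else 0 := by
      intro m k
      rw [hv_def]
      rw [hT2 m (u k) (u k), hχ_val m k]
      split_ifs <;> simp
    have hTw : ∀ m, T m w = 1 := by
      intro m
      rw [hfw (T m), tsum_congr (fun k => hTv m k), tsum_ite_eq]
    -- cluster point of the T m in the weak* topology
    set Tw : ℕ → WeakDual ℂ V := fun m => StrongDual.toWeakDual (T m) with hTwdef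
    have hcompact : IsCompact (WeakDual.toStrongDual ⁻¹' Metric.closedBall (0 : Dual' V) 1) :=
      WeakDual.isCompact_closedBall 0 1
    have hle : Filter.map Tw Filter.atTop ≤
        Filter.principal (WeakDual.toStrongDual ⁻¹' Metric.closedBall (0 : Dual' V) 1) := by
      rw [Filter.le_principal_iff, Filter.mem_map]
      refine Filter.univ_mem' fun m => ?_
      simp only [Set.mem_preimage, Metric.mem_closedBall, dist_zero_right]
      exact hT1 m
    obtain ⟨H, _, hH⟩ := hcompact.exists_clusterPt hle
    have hcluster : ∀ z : V, ∀ c : ℂ,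
        Filter.Tendsto (fun m => T m z) Filter.atTop (nhds c) →
        WeakDual.toStrongDual H z = c := by
      intro z c hc
      have hev : Continuous fun ψ : WeakDual ℂ V => ψ z :=
        WeakBilin.eval_continuous _ z
      have h1 : ClusterPt (H z) (Filter.map (fun ψ : WeakDual ℂ V => ψ z)
          (Filter.map Tw Filter.atTop)) :=
        hH.map hev.continuousAt Filter.tendsto_map
      rw [Filter.map_map] at h1
      have h2 : Filter.map ((fun ψ : WeakDual ℂ V => ψ z) ∘ Tw) Filter.atTop ≤ nhds c := hc
      haveI h1' := h1.neBot
      have h3 : (nhds (H z) ⊓ nhds c).NeBot :=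
        Filter.neBot_of_le (inf_le_inf_left _ h2)
      exact t2_iff_nhds.mp inferInstance h3
    have hHv : ∀ k, WeakDual.toStrongDual H (v k) = 0 := by
      intro k
      refine hcluster (v k) 0 ?_
      refine Filter.Tendsto.congr' ?_ tendsto_const_nhds
      filter_upwards [Filter.eventually_ge_atTop (k+1)] with m hm
      rw [hTv m k, if_neg]
      omega
    have hHw : WeakDual.toStrongDual H w = 1 := by
      refine hcluster w 1 ?_
      have : (fun m => T m w) = fun _ => (1:ℂ) := funext fun m => hTw m
      rw [this]
      exact tendsto_const_nhds
    have h0 : WeakDual.toStrongDual H w = 0 := by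
      rw [hfw, tsum_congr hHv, tsum_zero]
    rw [hHw] at h0
    exact one_ne_zero h0
  intro hSAI
  rw [StronglyArensIrregular] at hSAI
  rw [hSAI] at hX_mem
  exact hX_not hX_mem

end MainConstruction

section FinDimDirection

set_option synthInstance.maxHeartbeats 400000 in
lemma finrank_dual' (F : Type*) [NormedAddCommGroup F] [NormedSpace ℂ F]
    [FiniteDimensional ℂ F] :
    Module.finrank ℂ (Dual' F) = Module.finrank ℂ F := by
  have e : (F →ₗ[ℂ] ℂ) ≃ₗ[ℂ] (F →L[ℂ] ℂ) := LinearMap.toContinuousLinearMap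
  rw [← e.finrank_eq, Module.finrank_linearMap, Module.finrank_self, mul_one]

lemma surj_inclusionInDoubleDual (E : Type*) [NormedAddCommGroup E] [NormedSpace ℂ E]
    [FiniteDimensional ℂ E] :
    Function.Surjective (NormedSpace.inclusionInDoubleDual ℂ E) := by
  set ι := NormedSpace.inclusionInDoubleDual ℂ E with hι
  have hinj : Function.Injective ι := by
    intro a b hab
    have hz : ∀ g : Dual' E, g (a - b) = 0 := by
      intro g
      have h1 : ι a g = ι b g := by rw [hab]
      rw [NormedSpace.dual_def, NormedSpace.dual_def] at h1
      rw [map_sub, h1, sub_self]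
    have := NormedSpace.eq_zero_of_forall_dual_eq_zero ℂ hz
    exact sub_eq_zero.mp this
  have h1 : Module.finrank ℂ (Bidual E) = Module.finrank ℂ E := by
    rw [finrank_dual' (Dual' E), finrank_dual' E]
  have h2 : LinearMap.range (ι : E →L[ℂ] Bidual E).toLinearMap = ⊤ := by
    refine Submodule.eq_top_of_finrank_eq (K := ℂ) (V := Bidual E) ?_
    rw [LinearMap.finrank_range_of_inj hinj, h1]
  intro Z
  have hz : Z ∈ LinearMap.range (ι : E →L[ℂ] Bidual E).toLinearMap := h2 ▸ Submodule.mem_top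
  obtain ⟨w, hw⟩ := hz
  exact ⟨w, hw⟩

variable {A : Type*} [NormedAddCommGroup A] [NormedSpace ℂ A]
  {V : Type*} [NonUnitalNormedRing V] [NormedSpace ℂ V]
  [IsScalarTower ℂ V V] [SMulCommClass ℂ V V]

lemma findim_V_of_findim_A {t : A →L[ℂ] A →L[ℂ] V}
    (htensor : IsProjectiveTensorProduct A A V t) [FiniteDimensional ℂ A] :
    FiniteDimensional ℂ V := by
  classical
  set n := Module.finrank ℂ A with hn
  set b := Module.finBasis ℂ A with hbasis
  set S := Submodule.span ℂ (Set.range fun p : A × A => t p.1 p.2) with hS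
  set T2 := Submodule.span ℂ (Set.range fun q : Fin n × Fin n => t (b q.1) (b q.2)) with hT2
  have hST : S ≤ T2 := by
    rw [hS, Submodule.span_le]
    rintro z ⟨⟨a, c⟩, rfl⟩
    have ha : (∑ i, b.repr a i • b i) = a := b.sum_repr a
    have hc : (∑ j, b.repr c j • b j) = c := b.sum_repr c
    have hexp := t_expand t (fun i => b.repr a i) (fun j => b.repr c j)
      (fun i => b i) (fun j => b j)
    rw [ha, hc] at hexp
    show t a c ∈ T2
    rw [hexp]
    refine Submodule.sum_mem _ fun i _ => Submodule.sum_mem _ fun j _ => ?_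
    exact Submodule.smul_mem _ _ (Submodule.subset_span ⟨(i, j), rfl⟩)
  haveI hT2fin : FiniteDimensional ℂ T2 :=
    FiniteDimensional.span_of_finite ℂ (Set.finite_range _)
  haveI hSfin : FiniteDimensional ℂ S := Submodule.finiteDimensional_of_le hST
  have hclosed : IsClosed (S : Set V) := S.closed_of_finiteDimensional
  have huniv : (S : Set V) = Set.univ := by
    rw [← hclosed.closure_eq, htensor.dense.closure_eq]
  have hStop : S = ⊤ := by
    apply Submodule.eq_top_iff'.mpr
    intro x
    have : x ∈ (S : Set V) := by rw [huniv]; trivial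
    exact this
  haveI : FiniteDimensional ℂ (⊤ : Submodule ℂ V) := hStop ▸ hSfin
  exact Module.Finite.equiv (Submodule.topEquiv (R := ℂ) (M := V))

lemma topCentre_eq_univ_of_findim (V : Type*) [NonUnitalNormedRing V]
    [NormedSpace ℂ V] [IsScalarTower ℂ V V] [SMulCommClass ℂ V V]
    [FiniteDimensional ℂ V] : topCentre V = Set.univ := by
  refine Set.eq_univ_of_forall fun X => ?_
  show WStarContinuous fun Y : Bidual V => arens X Y
  refine WeakBilin.continuous_of_continuous_eval _ fun f => ?_
  obtain ⟨gf, hgf⟩ := surj_inclusionInDoubleDual (Dual' V)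
    (X.comp (dualMap (fBoxL f)))
  have key : ∀ Y : Bidual V, arens X Y f = Y gf := by
    intro Y
    have h1 : (NormedSpace.inclusionInDoubleDual ℂ (Dual' V)) gf Y
        = (X.comp (dualMap (fBoxL f))) Y := by rw [hgf]
    rw [NormedSpace.dual_def] at h1
    rw [arens_apply]
    have h2 : boxDual Y f = dualMap (fBoxL f) Y := rfl
    rw [h2]
    exact h1.symm
  exact (WeakBilin.eval_continuous _ gf).congr fun Y => (key _).symm

lemma sai_of_findim (V : Type*) [NonUnitalNormedRing V]
    [NormedSpace ℂ V] [IsScalarTower ℂ V V] [SMulCommClass ℂ V V]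
    [FiniteDimensional ℂ V] : StronglyArensIrregular V := by
  rw [StronglyArensIrregular, topCentre_eq_univ_of_findim V,
    Set.range_eq_univ.mpr (surj_inclusionInDoubleDual V)]

end FinDimDirection

section OrthFamily

open WeakDual Unitization

lemma exists_orth_family (A : Type*) [NonUnitalCommCStarAlgebra A]
    (hinf : ¬ FiniteDimensional ℂ A) :
    ∃ (u : ℕ → A) (χ : ℕ → (A →L[ℂ] ℂ)),
      (∀ k, star (u k) = u k) ∧ (∀ j k, j ≠ k → u j * u k = 0) ∧
      (∀ k, ‖u k‖ ≤ 1) ∧ (∀ m k, χ m (u k) = if k = m then 1 else 0) ∧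
      (∀ m, ‖χ m‖ ≤ 1) := by
  classical
  set B := Unitization ℂ A with hB
  set K := characterSpace ℂ B with hK
  set G := gelfandStarTransform B with hG
  have hGnorm : ∀ b : B, ‖G b‖ = ‖b‖ := fun b =>
    (gelfandTransform_isometry B).norm_map_of_map_zero (map_zero _) b
  have hGapp : ∀ (b : B) (φ : K), G b φ = φ.val b := fun _ _ => rfl
  -- K is infinite
  haveI hKinf : Infinite K := by
    rw [← not_finite_iff_infinite]
    intro hfin
    apply hinf
    haveI := Fintype.ofFinite K
    haveI : FiniteDimensional ℂ C(K, ℂ) := by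
      refine FiniteDimensional.of_injective
        ({ toFun := fun f : C(K, ℂ) => (f : K → ℂ),
           map_add' := fun f g => rfl, map_smul' := fun c f => rfl } :
          C(K, ℂ) →ₗ[ℂ] (K → ℂ)) ?_
      intro f g hfg
      exact ContinuousMap.ext fun z => congrFun hfg z
    haveI : FiniteDimensional ℂ B := by
      refine FiniteDimensional.of_injective
        ({ toFun := fun b : B => G b, map_add' := map_add G,
           map_smul' := map_smul G } : B →ₗ[ℂ] C(K, ℂ)) ?_
      intro a b hab
      exact G.injective hab
    exact FiniteDimensional.of_injective
      ({ toFun := fun a : A => (inr a : B),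
         map_add' := fun a b => inr_add ℂ a b,
         map_smul' := fun c a => inr_smul ℂ c a } : A →ₗ[ℂ] B)
      (inr_injective (R := ℂ))
  -- a non-isolated point
  obtain ⟨p, hp⟩ : ∃ p : K, (nhdsWithin p {p}ᶜ).NeBot := by
    by_contra h
    push_neg at h
    haveI : DiscreteTopology K := discreteTopology_iff_nhds_ne.mpr fun x =>
      h x
    haveI : Finite K := finite_of_compact_of_discrete
    exact not_finite K
  -- the character at infinity
  set χinf : K := CharacterSpace.equivAlgHom.symm (fstHom ℂ A) with hχinf
  have hχinf_apply : ∀ b : B, χinf.val b = b.fst := by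
    intro b
    have h1 := CharacterSpace.equivAlgHom_symm_coe (fstHom ℂ A)
    calc χinf.val b = (CharacterSpace.equivAlgHom.symm (fstHom ℂ A)) b := rfl
      _ = fstHom ℂ A b := by rw [h1]
      _ = b.fst := rfl
  -- the ambient open set avoiding the character at infinity
  obtain ⟨W₀, hW₀open, hpW₀, hW₀⟩ : ∃ W₀ : Set K, IsOpen W₀ ∧ p ∈ W₀ ∧
      ∀ x ∈ W₀, x ≠ p → x ≠ χinf := by
    by_cases hpχ : p = χinf
    · exact ⟨Set.univ, isOpen_univ, trivial, fun x _ hxp => by rw [← hpχ]; exact hxp⟩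
    · exact ⟨{χinf}ᶜ, isOpen_compl_singleton, hpχ, fun x hx _ => hx⟩
  -- one step of the recursive construction
  have hstep : ∀ W : Set K, IsOpen W → p ∈ W →
      ∃ s : K × Set K × Set K, IsOpen s.2.1 ∧ IsOpen s.2.2 ∧ p ∈ s.2.2 ∧
        s.1 ∈ s.2.1 ∧ s.2.1 ⊆ W ∧ s.2.2 ⊆ W ∧ s.2.1 ∩ s.2.2 = ∅ := by
    intro W hWopen hpW
    have hmem : W ∩ {p}ᶜ ∈ nhdsWithin p {p}ᶜ :=
      Filter.inter_mem (mem_nhdsWithin_of_mem_nhds (hWopen.mem_nhds hpW))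
        self_mem_nhdsWithin
    obtain ⟨x, hxW, hxp⟩ := Filter.nonempty_of_mem hmem
    obtain ⟨O', W', hO', hW', hxO', hpW', hdisj⟩ := t2_separation (hxp : x ≠ p)
    refine ⟨⟨x, O' ∩ W, W' ∩ W⟩, hO'.inter hWopen, hW'.inter hWopen, ⟨hpW', hpW⟩,
      ⟨hxO', hxW⟩, Set.inter_subset_right, Set.inter_subset_right, ?_⟩
    rw [Set.eq_empty_iff_forall_notMem]
    rintro z ⟨⟨h1, _⟩, h2, _⟩
    exact Set.disjoint_left.mp hdisj h1 h2
  -- iterate the construction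
  have hstep' : ∀ s : {W : Set K // IsOpen W ∧ p ∈ W},
      ∃ r : K × Set K × {W : Set K // IsOpen W ∧ p ∈ W}, IsOpen r.2.1 ∧
        r.1 ∈ r.2.1 ∧ r.2.1 ⊆ s.1 ∧ (r.2.2 : Set K) ⊆ s.1 ∧
        r.2.1 ∩ (r.2.2 : Set K) = ∅ := by
    rintro ⟨W, hWo, hWp⟩
    obtain ⟨⟨x, O, W'⟩, h1, h2, h3, h4, h5, h6, h7⟩ := hstep W hWo hWp
    exact ⟨⟨x, O, ⟨W', h2, h3⟩⟩, h1, h4, h5, h6, h7⟩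
  choose next hnopen hnmem hnsubO hnsubW hndisj using hstep'
  set stepW : {W : Set K // IsOpen W ∧ p ∈ W} → {W : Set K // IsOpen W ∧ p ∈ W} :=
    fun s => (next s).2.2 with hstepW
  set iter : ℕ → {W : Set K // IsOpen W ∧ p ∈ W} :=
    fun n => stepW^[n] ⟨W₀, hW₀open, hpW₀⟩ with hiter
  have hiter_succ : ∀ n, iter (n+1) = stepW (iter n) := fun n =>
    Function.iterate_succ_apply' stepW n _
  set xs : ℕ → K := fun n => (next (iter n)).1 with hxs
  set Os : ℕ → Set K := fun n => (next (iter n)).2.1 with hOs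
  have hOopen : ∀ n, IsOpen (Os n) := fun n => hnopen (iter n)
  have hxO : ∀ n, xs n ∈ Os n := fun n => hnmem (iter n)
  have hOsubW : ∀ n, Os n ⊆ (iter n).1 := fun n => hnsubO (iter n)
  have hWsucc : ∀ n, ((iter (n+1)).1 : Set K) ⊆ (iter n).1 := fun n => by
    rw [hiter_succ]
    exact hnsubW (iter n)
  have hOdisjW : ∀ n, Os n ∩ ((iter (n+1)).1 : Set K) = ∅ := fun n => by
    rw [hiter_succ]
    exact hndisj (iter n)
  have hWmono : ∀ m n, m ≤ n → ((iter n).1 : Set K) ⊆ (iter m).1 := by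
    intro m n hmn
    induction n, hmn using Nat.le_induction with
    | base => exact subset_rfl
    | succ n hmn ih => exact (hWsucc n).trans ih
  have hiter0 : (iter 0).1 = W₀ := rfl
  have hOsub₀ : ∀ n, Os n ⊆ W₀ := fun n => by
    have := (hOsubW n).trans (hWmono 0 n (Nat.zero_le n))
    rwa [hiter0] at this
  have hOdisj : ∀ m n, m ≠ n → Os m ∩ Os n = ∅ := by
    have key : ∀ m n, m < n → Os m ∩ Os n = ∅ := by
      intro m n hmn
      have h1 : Os n ⊆ ((iter (m+1)).1 : Set K) := (hOsubW n).trans (hWmono (m+1) n hmn)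
      rw [Set.eq_empty_iff_forall_notMem]
      rintro z ⟨hzm, hzn⟩
      have hz : z ∈ Os m ∩ ((iter (m+1)).1 : Set K) := ⟨hzm, h1 hzn⟩
      rw [hOdisjW m] at hz
      exact hz
    intro m n hmn
    rcases lt_or_gt_of_ne hmn with h | h
    · exact key m n h
    · rw [Set.inter_comm]
      exact key n m h
  have hpO : ∀ n, p ∉ Os n := by
    intro n hpn
    have hz : p ∈ Os n ∩ ((iter (n+1)).1 : Set K) := ⟨hpn, (iter (n+1)).2.2⟩
    rw [hOdisjW n] at hz
    exact hz
  have hχO : ∀ n, χinf ∉ Os n := by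
    intro n hχn
    rcases eq_or_ne χinf p with h | h
    · exact hpO n (h ▸ hχn)
    · exact (hW₀ χinf (hOsub₀ n hχn) h) rfl
  -- Urysohn bumps
  have hbump : ∀ n : ℕ, ∃ gn : C(K, ℝ), Set.EqOn gn 0 (Os n)ᶜ ∧ gn (xs n) = 1 ∧
      ∀ z, gn z ∈ Set.Icc (0:ℝ) 1 := by
    intro n
    have hdisj : Disjoint ((Os n)ᶜ) {xs n} := by
      rw [Set.disjoint_left]
      intro z hz hz1
      rw [Set.mem_singleton_iff] at hz1
      exact hz (by rw [hz1]; exact hxO n)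
    obtain ⟨gn, h0, h1, h01⟩ := exists_continuous_zero_one_of_isClosed
      (hOopen n).isClosed_compl (isClosed_singleton (x := xs n)) hdisj
    exact ⟨gn, h0, h1 rfl, h01⟩
  choose gn hg0 hg1 hg01 using hbump
  set gc : ℕ → C(K, ℂ) := fun n =>
    ⟨fun z => (gn n z : ℂ), Complex.continuous_ofReal.comp (gn n).continuous⟩ with hgc
  set bb : ℕ → B := fun n => G.symm (gc n) with hbb
  have hGbb : ∀ n, G (bb n) = gc n := fun n => G.apply_symm_apply _
  have hbb_val : ∀ (n : ℕ) (φ : K), φ.val (bb n) = (gn n φ : ℂ) := by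
    intro n φ
    rw [← hGapp (bb n) φ, hGbb]
    rfl
  have hbb_star : ∀ n, star (bb n) = bb n := by
    intro n
    rw [hbb]
    rw [← map_star G.symm]
    congr 1
    ext z
    exact Complex.conj_ofReal _
  have hbb_mul : ∀ j k, j ≠ k → bb j * bb k = 0 := by
    intro j k hjk
    rw [hbb]
    rw [← map_mul G.symm, ← map_zero G.symm]
    congr 1
    ext z
    show (gn j z : ℂ) * (gn k z : ℂ) = 0
    rcases em (z ∈ Os j) with hz | hz
    · have hzk : z ∉ Os k := by
        intro hzk
        have hzz : z ∈ Os j ∩ Os k := ⟨hz, hzk⟩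
        rw [hOdisj j k hjk] at hzz
        exact hzz
      rw [hg0 k hzk]
      simp
    · rw [hg0 j hz]
      simp
  have hbb_norm : ∀ n, ‖bb n‖ ≤ 1 := by
    intro n
    rw [← hGnorm (bb n), hGbb]
    refine (ContinuousMap.norm_le _ zero_le_one).mpr fun z => ?_
    show ‖(gn n z : ℂ)‖ ≤ 1
    rw [Complex.norm_real, Real.norm_of_nonneg (hg01 n z).1]
    exact (hg01 n z).2
  have hfst : ∀ n, (bb n).fst = 0 := by
    intro n
    have h1 : χinf.val (bb n) = (bb n).fst := hχinf_apply _
    have h2 : χinf.val (bb n) = (gn n χinf : ℂ) := hbb_val n χinf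
    have h3 : gn n χinf = 0 := hg0 n (hχO n)
    rw [h2, h3] at h1
    exact_mod_cast h1.symm
  have hbbA : ∀ n, (inr ((bb n).snd) : B) = bb n := by
    intro n
    have h1 := inl_fst_add_inr_snd_eq (bb n)
    rw [hfst n] at h1
    simpa using h1
  set u : ℕ → A := fun n => (bb n).snd with hu
  let inrL : A →ₗ[ℂ] B :=
    { toFun := fun a => inr a
      map_add' := fun a b => inr_add ℂ a b
      map_smul' := fun c a => inr_smul ℂ c a }
  have hinrL_norm : ∀ a : A, ‖inrL a‖ ≤ 1 * ‖a‖ := fun a => by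
    rw [one_mul]
    exact (norm_inr (𝕜 := ℂ) a).le
  let inrCLM : A →L[ℂ] B := inrL.mkContinuous 1 hinrL_norm
  let χ : ℕ → (A →L[ℂ] ℂ) := fun m =>
    (WeakDual.toStrongDual ((xs m).val)).comp inrCLM
  have hχ_apply : ∀ (m : ℕ) (a : A), χ m a = (xs m).val (inr a) := fun m a => rfl
  refine ⟨u, χ, ?_, ?_, ?_, ?_, ?_⟩
  · intro k
    apply inr_injective (R := ℂ)
    rw [inr_star, hbbA, hbb_star, ← hbbA]
  · intro j k hjk
    apply inr_injective (R := ℂ)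
    rw [inr_mul, hbbA, hbbA, hbb_mul j k hjk, inr_zero]
  · intro k
    have h1 := hbb_norm k
    rw [← hbbA k, Unitization.norm_inr] at h1
    exact h1
  · intro m k
    rw [hχ_apply, hbbA, hbb_val k (xs m)]
    rcases eq_or_ne k m with rfl | hkm
    · rw [hg1 k]
      simp
    · have hxm : xs m ∉ Os k := by
        intro hmem
        have hzz : xs m ∈ Os k ∩ Os m := ⟨hmem, hxO m⟩
        rw [hOdisj k m hkm] at hzz
        exact hzz
      rw [hg0 k hxm, if_neg hkm]
      simp
  · intro m
    refine opNorm_le_of_unit _ zero_le_one fun a ha => ?_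
    rw [hχ_apply]
    calc ‖(xs m).val (inr a)‖ = ‖G (inr a) (xs m)‖ := by rw [hGapp]
      _ ≤ ‖G (inr a)‖ := ContinuousMap.norm_coe_le_norm _ _
      _ = ‖(inr a : B)‖ := hGnorm _
      _ = ‖a‖ := norm_inr (𝕜 := ℂ) a
      _ ≤ 1 := ha

end OrthFamily

end Aux

/-- **Theorem (Statement 3).** Let `A` be a commutative C⋆-algebra.  The Varopoulos
algebra `V_A = A ⊗_γ A` is strongly Arens irregular if and only if `A` is
finite-dimensional. -/
theorem varopoulos_stronglyArensIrregular_iff_finiteDimensional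
  {A : Type u} [NonUnitalCommCStarAlgebra A]
  {V : Type*} [NonUnitalNormedRing V] [NormedSpace ℂ V]
  [IsScalarTower ℂ V V] [SMulCommClass ℂ V V]
  (t : A →L[ℂ] A →L[ℂ] V)
  (htensor : IsProjectiveTensorProduct A A V t)
  (hmul : ∀ a b c d : A, t a b * t c d = t (a * c) (b * d)) :
  StronglyArensIrregular V ↔ FiniteDimensional ℂ A := by
  constructor
  · intro hSAI
    by_contra hinf
    obtain ⟨u, χ, h1, h2, h3, h4, h5⟩ := exists_orth_family A hinf
    exact not_stronglyArensIrregular_of_orth_family t htensor hmul u χ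
      h1 h2 h3 h4 h5 hSAI
  · intro hfin
    haveI := hfin
    haveI : FiniteDimensional ℂ V := findim_V_of_findim_A htensor
    exact sai_of_findim V

end Paper
end
end

section
/- The Banach algebra ℓ_∞ ⊗_γ ℓ_∞ (projective tensor product of ℓ_∞ with itself, with multiplication induced by pointwise products) is not Arens regular. -/
noncomputable section
open scoped ComplexOrder ENNReal NNReal InnerProductSpace
open NormedSpace Filter Topology ContinuousLinearMap

namespace NAR

/-- A fixed free ultrafilter on `ℕ`. -/
def U : Ultrafilter ℕ := Ultrafilter.of atTop

lemma U_le_atTop : (U : Filter ℕ) ≤ atTop := Ultrafilter.of_le _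

/-- Limit along `U`. -/
noncomputable def ulim (f : ℕ → ℂ) : ℂ := limUnder (U : Filter ℕ) f

lemma ulim_spec {f : ℕ → ℂ} {C : ℝ} (h : ∀ n, ‖f n‖ ≤ C) :
    Tendsto f (U : Filter ℕ) (𝓝 (ulim f)) := by
  obtain ⟨x, -, hx⟩ := (isCompact_closedBall (0 : ℂ) C).ultrafilter_le_nhds (U.map f)
    (by
      rw [le_principal_iff]
      have hmem : ∀ n, f n ∈ Metric.closedBall (0 : ℂ) C := by
        intro n; simpa [Metric.mem_closedBall, dist_eq_norm] using h n
      exact Filter.mem_map.2 (Filter.univ_mem' hmem))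
  have ht : Tendsto f (U : Filter ℕ) (𝓝 x) := hx
  rw [ulim, ht.limUnder_eq]; exact ht

lemma ulim_eq {f : ℕ → ℂ} {L : ℂ} (h : Tendsto f (U : Filter ℕ) (𝓝 L)) : ulim f = L :=
  h.limUnder_eq

lemma ulim_atTop {f : ℕ → ℂ} {L : ℂ} (h : Tendsto f atTop (𝓝 L)) : ulim f = L :=
  ulim_eq (h.mono_left U_le_atTop)

lemma ulim_eventually {f : ℕ → ℂ} {c : ℂ} (h : ∀ᶠ n in atTop, f n = c) : ulim f = c :=
  ulim_atTop (Tendsto.congr' (h.mono fun _ hn => hn.symm) tendsto_const_nhds)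

lemma ulim_norm_le {f : ℕ → ℂ} {C : ℝ} (h : ∀ n, ‖f n‖ ≤ C) : ‖ulim f‖ ≤ C :=
  le_of_tendsto (ulim_spec h).norm (Eventually.of_forall h)

/-- Rademacher-type sign sequences. -/
def rad (k n : ℕ) : ℝ := if n.testBit k then -1 else 1

lemma rad_mul_self (k n : ℕ) : rad k n * rad k n = 1 := by
  unfold rad; split <;> norm_num

lemma abs_rad (k n : ℕ) : |rad k n| = 1 := by
  unfold rad; split <;> norm_num

lemma rad_flip_self (k n : ℕ) : rad k (n ^^^ 2 ^ k) = -rad k n := by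
  unfold rad
  rw [Nat.testBit_xor, Nat.testBit_two_pow_self]
  cases h : n.testBit k <;> simp [h]

lemma rad_flip_ne {l k : ℕ} (h : l ≠ k) (n : ℕ) : rad l (n ^^^ 2 ^ k) = rad l n := by
  unfold rad
  rw [Nat.testBit_xor, Nat.testBit_two_pow_of_ne (fun hk => h hk.symm)]
  simp

def uu (p : ℕ × ℕ) (n : ℕ) : ℝ := rad (2 * p.1) n * rad (2 * p.2 + 1) n

lemma abs_uu (p : ℕ × ℕ) (n : ℕ) : |uu p n| = 1 := by
  rw [uu, abs_mul, abs_rad, abs_rad, mul_one]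

lemma sum_flip_zero {N k : ℕ} (hk : k < N) (f : ℕ → ℝ)
    (hf : ∀ n, f (n ^^^ 2 ^ k) = -f n) :
    ∑ n ∈ Finset.range (2 ^ N), f n = 0 := by
  have h2 : (2 : ℕ) ^ k < 2 ^ N := Nat.pow_lt_pow_right one_lt_two hk
  refine Finset.sum_involution (fun n _ => n ^^^ 2 ^ k) (fun n _ => by rw [hf]; ring)
    (fun n _ _ heq => ?_) (fun n hn => ?_) (fun n _ => ?_)
  · have heq' : n ^^^ 2 ^ k = n := heq
    have h1 : (n ^^^ 2 ^ k).testBit k = n.testBit k := by rw [heq']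
    rw [Nat.testBit_xor, Nat.testBit_two_pow_self] at h1
    cases h : n.testBit k <;> simp [h] at h1
  · exact Finset.mem_range.2 (Nat.xor_lt_two_pow (Finset.mem_range.1 hn) h2)
  · simp [Nat.xor_assoc]

lemma sum_uu_self (p : ℕ × ℕ) (N : ℕ) :
    ∑ n ∈ Finset.range (2 ^ N), uu p n * uu p n = 2 ^ N := by
  have h : ∀ n, uu p n * uu p n = 1 := fun n => by
    rw [uu, mul_mul_mul_comm, rad_mul_self, rad_mul_self, one_mul]
  rw [Finset.sum_congr rfl fun n _ => h n, Finset.sum_const, Finset.card_range]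
  simp

lemma sum_uu_ne {p q : ℕ × ℕ} (hpq : p ≠ q) {N : ℕ}
    (h1 : 2 * p.1 < N) (h2 : 2 * q.1 < N) (h3 : 2 * p.2 + 1 < N) (h4 : 2 * q.2 + 1 < N) :
    ∑ n ∈ Finset.range (2 ^ N), uu p n * uu q n = 0 := by
  by_cases hc : p.1 = q.1
  · have hj : p.2 ≠ q.2 := fun h => hpq (Prod.ext hc h)
    refine sum_flip_zero h3 _ fun n => ?_
    simp only [uu]
    rw [rad_flip_self, rad_flip_ne (show 2 * p.1 ≠ 2 * p.2 + 1 by omega),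
      rad_flip_ne (show 2 * q.1 ≠ 2 * p.2 + 1 by omega),
      rad_flip_ne (show 2 * q.2 + 1 ≠ 2 * p.2 + 1 by omega)]
    ring
  · refine sum_flip_zero h1 _ fun n => ?_
    simp only [uu]
    rw [rad_flip_self, rad_flip_ne (show 2 * p.2 + 1 ≠ 2 * p.1 by omega),
      rad_flip_ne (show 2 * q.1 ≠ 2 * p.1 by omega),
      rad_flip_ne (show 2 * q.2 + 1 ≠ 2 * p.1 by omega)]
    ring
open scoped InnerProductSpace

/-- The sequence space `ℓ∞`. -/
abbrev L : Type := ↥(lp (fun _ : ℕ => ℂ) ∞)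

lemma coord_le (a : L) (n : ℕ) : ‖a n‖ ≤ ‖a‖ :=
  lp.norm_apply_le_norm ENNReal.top_ne_zero a n

/-- Normalized Walsh–Fourier coefficient at level `N`. -/
noncomputable def cavg (a : ℕ → ℂ) (p : ℕ × ℕ) (N : ℕ) : ℂ :=
  ((((2 : ℝ) ^ N)⁻¹ : ℝ) : ℂ) * ∑ n ∈ Finset.range (2 ^ N), ((uu p n : ℝ) : ℂ) * a n

lemma norm_cavg_le {a : ℕ → ℂ} {C : ℝ} (h : ∀ n, ‖a n‖ ≤ C) (p : ℕ × ℕ) (N : ℕ) :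
    ‖cavg a p N‖ ≤ C := by
  have hC : 0 ≤ C := le_trans (norm_nonneg _) (h 0)
  rw [cavg, norm_mul]
  have h1 : ‖∑ n ∈ Finset.range (2 ^ N), ((uu p n : ℝ) : ℂ) * a n‖ ≤ (2 : ℝ) ^ N * C := by
    calc ‖∑ n ∈ Finset.range (2 ^ N), ((uu p n : ℝ) : ℂ) * a n‖
        ≤ ∑ n ∈ Finset.range (2 ^ N), ‖((uu p n : ℝ) : ℂ) * a n‖ := norm_sum_le _ _
      _ ≤ ∑ _n ∈ Finset.range (2 ^ N), C := by
          refine Finset.sum_le_sum fun n _ => ?_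
          rw [norm_mul, Complex.norm_real, Real.norm_eq_abs, abs_uu, one_mul]
          exact h n
      _ = (2 : ℝ) ^ N * C := by
          rw [Finset.sum_const, Finset.card_range, nsmul_eq_mul]; push_cast; ring
  have h2 : ‖((((2 : ℝ) ^ N)⁻¹ : ℝ) : ℂ)‖ = ((2 : ℝ) ^ N)⁻¹ := by
    rw [Complex.norm_real, Real.norm_eq_abs, abs_of_nonneg (by positivity)]
  rw [h2]
  calc ((2 : ℝ) ^ N)⁻¹ * ‖∑ n ∈ Finset.range (2 ^ N), ((uu p n : ℝ) : ℂ) * a n‖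
      ≤ ((2 : ℝ) ^ N)⁻¹ * ((2 : ℝ) ^ N * C) := by
        exact mul_le_mul_of_nonneg_left h1 (by positivity)
    _ = C := by field_simp

/-- The `p`-th generalized Walsh–Fourier coefficient. -/
noncomputable def phi (p : ℕ × ℕ) (a : ℕ → ℂ) : ℂ := ulim (fun N => cavg a p N)

lemma phi_spec (a : L) (p : ℕ × ℕ) :
    Tendsto (fun N => cavg (⇑a) p N) (U : Filter ℕ) (𝓝 (phi p ⇑a)) :=
  ulim_spec (fun N => norm_cavg_le (coord_le a) p N)

lemma norm_phi_le (a : L) (p : ℕ × ℕ) : ‖phi p ⇑a‖ ≤ ‖a‖ :=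
  ulim_norm_le (fun N => norm_cavg_le (coord_le a) p N)

/-- Walsh elements of `ℓ∞`. -/
noncomputable def Uel (p : ℕ × ℕ) : L :=
  ⟨fun n => ((uu p n : ℝ) : ℂ), memℓp_infty ⟨1, by
    rintro x ⟨n, rfl⟩
    simp [Complex.norm_real, Real.norm_eq_abs, abs_uu]⟩⟩

lemma Uel_coe (p : ℕ × ℕ) : ⇑(Uel p) = fun n => ((uu p n : ℝ) : ℂ) := rfl

noncomputable def Ael (i : ℕ) : L :=
  ⟨fun n => ((rad (2 * i) n : ℝ) : ℂ), memℓp_infty ⟨1, by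
    rintro x ⟨n, rfl⟩
    simp [Complex.norm_real, Real.norm_eq_abs, abs_rad]⟩⟩

noncomputable def Cel (j : ℕ) : L :=
  ⟨fun n => ((rad (2 * j + 1) n : ℝ) : ℂ), memℓp_infty ⟨1, by
    rintro x ⟨n, rfl⟩
    simp [Complex.norm_real, Real.norm_eq_abs, abs_rad]⟩⟩

lemma norm_Ael_le (i : ℕ) : ‖Ael i‖ ≤ 1 :=
  lp.norm_le_of_forall_le zero_le_one fun n => by
    simp [Ael, Complex.norm_real, Real.norm_eq_abs, abs_rad]

lemma norm_Cel_le (j : ℕ) : ‖Cel j‖ ≤ 1 :=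
  lp.norm_le_of_forall_le zero_le_one fun n => by
    simp [Cel, Complex.norm_real, Real.norm_eq_abs, abs_rad]

lemma Ael_mul_Cel (i j : ℕ) : Ael i * Cel j = Uel (i, j) := by
  apply Subtype.ext
  rw [lp.infty_coeFn_mul]
  funext n
  show ((rad (2 * i) n : ℝ) : ℂ) * ((rad (2 * j + 1) n : ℝ) : ℂ) = ((uu (i, j) n : ℝ) : ℂ)
  rw [uu]; push_cast; rfl

lemma cavg_Uel {p q : ℕ × ℕ} {N : ℕ}
    (h1 : 2 * p.1 < N) (h2 : 2 * q.1 < N) (h3 : 2 * p.2 + 1 < N) (h4 : 2 * q.2 + 1 < N) :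
    cavg (⇑(Uel q)) p N = if p = q then 1 else 0 := by
  have hsum : ∑ n ∈ Finset.range (2 ^ N), ((uu p n : ℝ) : ℂ) * ((uu q n : ℝ) : ℂ)
      = ((∑ n ∈ Finset.range (2 ^ N), uu p n * uu q n : ℝ) : ℂ) := by
    push_cast; rfl
  rw [cavg, Uel_coe, hsum]
  by_cases hpq : p = q
  · subst hpq
    rw [sum_uu_self, if_pos rfl, ← Complex.ofReal_mul]
    norm_num
  · rw [sum_uu_ne hpq h1 h2 h3 h4, if_neg hpq]
    simp

lemma phi_Uel (p q : ℕ × ℕ) : phi p ⇑(Uel q) = if p = q then 1 else 0 := by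
  refine ulim_eventually ?_
  filter_upwards [eventually_ge_atTop (2 * p.1 + 1), eventually_ge_atTop (2 * q.1 + 1),
    eventually_ge_atTop (2 * p.2 + 2), eventually_ge_atTop (2 * q.2 + 2)] with N hN1 hN2 hN3 hN4
  exact cavg_Uel (by omega) (by omega) (by omega) (by omega)
/-- Euclidean vector from a sequence. -/
noncomputable def evec (M : ℕ) (f : ℕ → ℂ) : EuclideanSpace ℂ (Fin M) :=
  (WithLp.equiv 2 _).symm fun n : Fin M => f ↑n

lemma inner_rc (M : ℕ) (c : ℕ → ℝ) (d : ℕ → ℂ) :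
    (inner ℂ (evec M fun n => ((c n : ℝ) : ℂ)) (evec M d) : ℂ)
      = ∑ n ∈ Finset.range M, ((c n : ℝ) : ℂ) * d n := by
  rw [PiLp.inner_apply, ← Fin.sum_univ_eq_sum_range (fun n => ((c n : ℝ) : ℂ) * d n) M]
  refine Finset.sum_congr rfl fun i _ => ?_
  rw [RCLike.inner_apply]
  show d (i : ℕ) * (starRingEnd ℂ) ((c (i : ℕ) : ℝ) : ℂ) = _
  rw [Complex.conj_ofReal, mul_comm]

lemma bessel_finite (a : L) (F : Finset (ℕ × ℕ)) {N : ℕ}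
    (hN : ∀ p ∈ F, 2 * p.1 < N ∧ 2 * p.2 + 1 < N) :
    ∑ p ∈ F, ‖cavg (⇑a) p N‖ ^ 2 ≤ ‖a‖ ^ 2 := by
  classical
  set s : ℝ := ((2 : ℝ) ^ N)⁻¹ with hs
  have hs0 : 0 ≤ s := by positivity
  have hsq : Real.sqrt s * Real.sqrt s = s := Real.mul_self_sqrt hs0
  have hc : ((Real.sqrt s : ℝ) : ℂ) * ((Real.sqrt s : ℝ) : ℂ) = ((s : ℝ) : ℂ) := by
    rw [← Complex.ofReal_mul, hsq]
  have hs1 : s * (2 : ℝ) ^ N = 1 := inv_mul_cancel₀ (by positivity)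
  set vv : F → EuclideanSpace ℂ (Fin (2 ^ N)) :=
    (fun p => evec (2 ^ N) fun n => ((Real.sqrt s * uu (p : ℕ × ℕ) n : ℝ) : ℂ)) with hvv
  set y : EuclideanSpace ℂ (Fin (2 ^ N)) :=
    evec (2 ^ N) (fun n => ((Real.sqrt s : ℝ) : ℂ) * a n) with hyy
  have hinner : ∀ p q : ℕ × ℕ,
      (inner ℂ (evec (2 ^ N) fun n => ((Real.sqrt s * uu p n : ℝ) : ℂ))
        (evec (2 ^ N) fun n => ((Real.sqrt s * uu q n : ℝ) : ℂ)) : ℂ)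
      = ((s * ∑ n ∈ Finset.range (2 ^ N), uu p n * uu q n : ℝ) : ℂ) := by
    intro p q
    rw [inner_rc (2 ^ N) (fun n => Real.sqrt s * uu p n)
      (fun n => ((Real.sqrt s * uu q n : ℝ) : ℂ))]
    push_cast
    rw [Finset.mul_sum]
    refine Finset.sum_congr rfl fun n _ => ?_
    linear_combination (uu p n : ℂ) * (uu q n : ℂ) * hc
  have horth : Orthonormal ℂ vv := by
    rw [orthonormal_iff_ite]
    intro i j
    rw [hvv]
    by_cases h : i = j
    · subst h
      rw [hinner, sum_uu_self, hs1, if_pos rfl]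
      norm_num
    · have hcoe : (i : ℕ × ℕ) ≠ (j : ℕ × ℕ) := fun e => h (Subtype.ext e)
      rw [hinner, sum_uu_ne hcoe (hN _ i.2).1 (hN _ j.2).1 (hN _ i.2).2 (hN _ j.2).2,
        mul_zero, if_neg h]
      norm_num
  have hiy : ∀ i : F, (inner ℂ (vv i) y : ℂ) = cavg (⇑a) (i : ℕ × ℕ) N := by
    intro i
    rw [hvv, hyy]
    rw [inner_rc (2 ^ N) (fun n => Real.sqrt s * uu (i : ℕ × ℕ) n)
      (fun n => ((Real.sqrt s : ℝ) : ℂ) * a n)]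
    rw [cavg, ← hs, Finset.mul_sum]
    refine Finset.sum_congr rfl fun n _ => ?_
    push_cast
    linear_combination (uu (i : ℕ × ℕ) n : ℂ) * a n * hc
  have hy : ‖y‖ ^ 2 ≤ ‖a‖ ^ 2 := by
    have hyn : ‖y‖ ^ 2 = ∑ n : Fin (2 ^ N), ‖y n‖ ^ 2 := by
      rw [EuclideanSpace.norm_eq, Real.sq_sqrt]
      positivity
    rw [hyn]
    have hterm : ∀ n : Fin (2 ^ N), ‖y n‖ ^ 2 ≤ s * ‖a‖ ^ 2 := by
      intro n
      have hn1 : ‖y n‖ = Real.sqrt s * ‖a (n : ℕ)‖ := by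
        show ‖((Real.sqrt s : ℝ) : ℂ) * a (n : ℕ)‖ = _
        rw [norm_mul, Complex.norm_real, Real.norm_eq_abs,
          abs_of_nonneg (Real.sqrt_nonneg s)]
      rw [hn1, mul_pow, Real.sq_sqrt hs0]
      have hcl := coord_le a (n : ℕ)
      have h2 : ‖a (n : ℕ)‖ ^ 2 ≤ ‖a‖ ^ 2 := by
        have h0 := norm_nonneg (a (n : ℕ))
        nlinarith
      exact mul_le_mul_of_nonneg_left h2 hs0
    calc ∑ n : Fin (2 ^ N), ‖y n‖ ^ 2 ≤ ∑ _n : Fin (2 ^ N), s * ‖a‖ ^ 2 :=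
          Finset.sum_le_sum fun n _ => hterm n
      _ = (2 : ℝ) ^ N * (s * ‖a‖ ^ 2) := by
          rw [Finset.sum_const, Finset.card_univ, Fintype.card_fin, nsmul_eq_mul]
          push_cast; ring
      _ = ‖a‖ ^ 2 := by rw [← mul_assoc, mul_comm ((2:ℝ)^N) s, hs1, one_mul]
  calc ∑ p ∈ F, ‖cavg (⇑a) p N‖ ^ 2
      = ∑ i : F, ‖cavg (⇑a) (i : ℕ × ℕ) N‖ ^ 2 := (Finset.sum_coe_sort F _).symm
    _ = ∑ i : F, ‖(inner ℂ (vv i) y : ℂ)‖ ^ 2 := by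
        exact Finset.sum_congr rfl fun i _ => by rw [hiy i]
    _ ≤ ‖y‖ ^ 2 := horth.sum_inner_products_le y
    _ ≤ ‖a‖ ^ 2 := hy

lemma bessel (a : L) (F : Finset (ℕ × ℕ)) : ∑ p ∈ F, ‖phi p ⇑a‖ ^ 2 ≤ ‖a‖ ^ 2 := by
  have hev : ∀ᶠ N in atTop, ∑ p ∈ F, ‖cavg (⇑a) p N‖ ^ 2 ≤ ‖a‖ ^ 2 := by
    filter_upwards [eventually_ge_atTop (F.sup fun p => max (2 * p.1 + 1) (2 * p.2 + 2))]
      with N hNB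
    refine bessel_finite a F fun p hp => ?_
    have hm := max_le_iff.1 ((Finset.le_sup (f := fun p : ℕ × ℕ =>
      max (2 * p.1 + 1) (2 * p.2 + 2)) hp).trans hNB)
    omega
  have ht : Tendsto (fun N => ∑ p ∈ F, ‖cavg (⇑a) p N‖ ^ 2) (U : Filter ℕ)
      (𝓝 (∑ p ∈ F, ‖phi p ⇑a‖ ^ 2)) :=
    tendsto_finset_sum F fun p _ => ((phi_spec a p).norm).pow 2
  exact le_of_tendsto ht (hev.filter_mono U_le_atTop)

lemma summable_phi_sq (a : L) : Summable fun p : ℕ × ℕ => ‖phi p ⇑a‖ ^ 2 :=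
  summable_of_sum_le (fun _ => by positivity) (fun F => bessel a F)

/-- Triangular indicator. -/
def ind (p : ℕ × ℕ) : ℂ := if p.1 ≤ p.2 then 1 else 0

lemma norm_ind_le (p : ℕ × ℕ) : ‖ind p‖ ≤ 1 := by
  unfold ind; split <;> simp

lemma mterm_le (a b : L) (p : ℕ × ℕ) :
    ‖ind p * phi p ⇑a * phi p ⇑b‖ ≤ ‖phi p ⇑a‖ * ‖phi p ⇑b‖ := by
  rw [norm_mul, norm_mul]
  calc ‖ind p‖ * ‖phi p ⇑a‖ * ‖phi p ⇑b‖
      ≤ 1 * ‖phi p ⇑a‖ * ‖phi p ⇑b‖ := by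
        refine mul_le_mul_of_nonneg_right ?_ (norm_nonneg _)
        exact mul_le_mul_of_nonneg_right (norm_ind_le p) (norm_nonneg _)
    _ = ‖phi p ⇑a‖ * ‖phi p ⇑b‖ := by ring

lemma summable_mterm (a b : L) :
    Summable fun p : ℕ × ℕ => ‖ind p * phi p ⇑a * phi p ⇑b‖ := by
  refine Summable.of_nonneg_of_le (fun p => norm_nonneg _) (fun p => ?_)
    (((summable_phi_sq a).add (summable_phi_sq b)).mul_left (1 / 2))
  refine (mterm_le a b p).trans ?_
  nlinarith [sq_nonneg (‖phi p ⇑a‖ - ‖phi p ⇑b‖)]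

lemma summable_m (a b : L) :
    Summable fun p : ℕ × ℕ => ind p * phi p ⇑a * phi p ⇑b :=
  (summable_mterm a b).of_norm

/-- The key bilinear form on `ℓ∞ × ℓ∞`. -/
noncomputable def mfun (a b : L) : ℂ := ∑' p : ℕ × ℕ, ind p * phi p ⇑a * phi p ⇑b

lemma norm_mfun_le (a b : L) : ‖mfun a b‖ ≤ ‖a‖ * ‖b‖ := by
  refine (norm_tsum_le_tsum_norm (summable_mterm a b)).trans ?_
  refine Summable.tsum_le_of_sum_le (summable_mterm a b) fun F => ?_
  have hF : ∑ p ∈ F, ‖ind p * phi p ⇑a * phi p ⇑b‖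
      ≤ ∑ p ∈ F, ‖phi p ⇑a‖ * ‖phi p ⇑b‖ :=
    Finset.sum_le_sum fun p _ => mterm_le a b p
  have hcs := Finset.sum_mul_sq_le_sq_mul_sq F (fun p => ‖phi p ⇑a‖) (fun p => ‖phi p ⇑b‖)
  have hA := bessel a F
  have hB := bessel b F
  have hA0 : (0:ℝ) ≤ ∑ p ∈ F, ‖phi p ⇑a‖ ^ 2 :=
    Finset.sum_nonneg fun p _ => sq_nonneg _
  have hB0 : (0:ℝ) ≤ ∑ p ∈ F, ‖phi p ⇑b‖ ^ 2 :=
    Finset.sum_nonneg fun p _ => sq_nonneg _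
  have hS0 : (0:ℝ) ≤ ∑ p ∈ F, ‖phi p ⇑a‖ * ‖phi p ⇑b‖ :=
    Finset.sum_nonneg fun p _ => mul_nonneg (norm_nonneg _) (norm_nonneg _)
  have hna := norm_nonneg a
  have hnb := norm_nonneg b
  nlinarith [mul_nonneg hna hnb, sq_nonneg (‖a‖ * ‖b‖ - ∑ p ∈ F, ‖phi p ⇑a‖ * ‖phi p ⇑b‖),
    mul_le_mul hA hB hB0 (by nlinarith)]

lemma mfun_Uel (p : ℕ × ℕ) : mfun (Uel p) (Uel p) = ind p := by
  rw [mfun, tsum_eq_single p (fun q hq => by rw [phi_Uel q p, if_neg hq]; ring)]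
  rw [phi_Uel p p, if_pos rfl]
  ring

lemma phi_coe_add (p : ℕ × ℕ) (a b : L) : phi p ⇑(a + b) = phi p ⇑a + phi p ⇑b := by
  refine ulim_eq ?_
  have h : (fun N => cavg (⇑(a + b)) p N) = fun N => cavg (⇑a) p N + cavg (⇑b) p N := by
    funext N
    simp only [cavg, lp.coeFn_add, Pi.add_apply]
    have h2 : ∑ n ∈ Finset.range (2 ^ N), ((uu p n : ℝ) : ℂ) * (a n + b n)
        = (∑ n ∈ Finset.range (2 ^ N), ((uu p n : ℝ) : ℂ) * a n)
          + ∑ n ∈ Finset.range (2 ^ N), ((uu p n : ℝ) : ℂ) * b n := by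
      rw [← Finset.sum_add_distrib]
      exact Finset.sum_congr rfl fun n _ => by ring
    rw [h2, mul_add]
  rw [show (fun N => cavg (⇑(a + b)) p N) = _ from h]
  exact (phi_spec a p).add (phi_spec b p)

lemma phi_coe_smul (p : ℕ × ℕ) (c : ℂ) (a : L) : phi p ⇑(c • a) = c * phi p ⇑a := by
  refine ulim_eq ?_
  have h : (fun N => cavg (⇑(c • a)) p N) = fun N => c * cavg (⇑a) p N := by
    funext N
    simp only [cavg, lp.coeFn_smul, Pi.smul_apply, smul_eq_mul]
    have h2 : ∑ n ∈ Finset.range (2 ^ N), ((uu p n : ℝ) : ℂ) * (c * a n)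
        = c * ∑ n ∈ Finset.range (2 ^ N), ((uu p n : ℝ) : ℂ) * a n := by
      rw [Finset.mul_sum]
      exact Finset.sum_congr rfl fun n _ => by ring
    rw [h2]; ring
  rw [show (fun N => cavg (⇑(c • a)) p N) = _ from h]
  exact (phi_spec a p).const_mul c

/-- `mfun` as a bilinear map. -/
noncomputable def Mlin : L →ₗ[ℂ] L →ₗ[ℂ] ℂ := by
  refine LinearMap.mk₂ ℂ mfun ?_ ?_ ?_ ?_
  · intro a₁ a₂ b
    have h : (fun p : ℕ × ℕ => ind p * phi p ⇑(a₁ + a₂) * phi p ⇑b)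
        = fun p => (ind p * phi p ⇑a₁ * phi p ⇑b) + (ind p * phi p ⇑a₂ * phi p ⇑b) := by
      funext q; rw [phi_coe_add]; ring
    rw [mfun, h, Summable.tsum_add (summable_m a₁ b) (summable_m a₂ b)]; rfl
  · intro c a b
    have h : (fun p : ℕ × ℕ => ind p * phi p ⇑(c • a) * phi p ⇑b)
        = fun p => c * (ind p * phi p ⇑a * phi p ⇑b) := by
      funext q; rw [phi_coe_smul]; ring
    rw [mfun, h, tsum_mul_left]; rfl
  · intro a b₁ b₂
    have h : (fun p : ℕ × ℕ => ind p * phi p ⇑a * phi p ⇑(b₁ + b₂))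
        = fun p => (ind p * phi p ⇑a * phi p ⇑b₁) + (ind p * phi p ⇑a * phi p ⇑b₂) := by
      funext q; rw [phi_coe_add]; ring
    rw [mfun, h, Summable.tsum_add (summable_m a b₁) (summable_m a b₂)]; rfl
  · intro c a b
    have h : (fun p : ℕ × ℕ => ind p * phi p ⇑a * phi p ⇑(c • b))
        = fun p => c * (ind p * phi p ⇑a * phi p ⇑b) := by
      funext q; rw [phi_coe_smul]; ring
    rw [mfun, h, tsum_mul_left]; rfl

/-- `mfun` as a continuous bilinear map. -/
noncomputable def Mclm : L →L[ℂ] L →L[ℂ] ℂ :=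
  LinearMap.mkContinuous₂ Mlin 1 fun a b => by
    rw [one_mul]
    exact norm_mfun_le a b

lemma Mclm_apply (a b : L) : Mclm a b = mfun a b := rfl

end NAR

namespace Paper

universe v

set_option maxHeartbeats 2000000 in
/-- **Theorem (Statement 10).** The Banach algebra `ℓ∞ ⊗_γ ℓ∞` is not Arens regular. -/
theorem not_arensRegular_projTensorSquare_linfty
  {V : Type*} [NonUnitalNormedRing V] [NormedSpace ℂ V]
  [IsScalarTower ℂ V V] [SMulCommClass ℂ V V]
  (t : lp (fun _ : ℕ => ℂ) ∞ →L[ℂ] lp (fun _ : ℕ => ℂ) ∞ →L[ℂ] V)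
  (htensor : IsProjectiveTensorProduct (lp (fun _ : ℕ => ℂ) ∞) (lp (fun _ : ℕ => ℂ) ∞) V t)
  (hmul : ∀ a b c d : lp (fun _ : ℕ => ℂ) ∞, t a b * t c d = t (a * c) (b * d)) :
  ¬ ArensRegular V := by
  intro hreg
  obtain ⟨T, -, hT⟩ := htensor.lift NAR.Mclm
  set v : ℕ → V := fun i => t (NAR.Ael i) (NAR.Ael i) with hv
  set w : ℕ → V := fun j => t (NAR.Cel j) (NAR.Cel j) with hw
  have hvb : ∀ i, ‖v i‖ ≤ 1 := by
    intro i
    simp only [hv]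
    refine (htensor.norm_le _ _).trans ?_
    have h1 := NAR.norm_Ael_le i
    nlinarith [norm_nonneg (NAR.Ael i)]
  have hwb : ∀ j, ‖w j‖ ≤ 1 := by
    intro j
    simp only [hw]
    refine (htensor.norm_le _ _).trans ?_
    have h1 := NAR.norm_Cel_le j
    nlinarith [norm_nonneg (NAR.Cel j)]
  have hTvw : ∀ i j, T (v i * w j) = NAR.ind (i, j) := by
    intro i j
    simp only [hv, hw]
    rw [hmul, NAR.Ael_mul_Cel, hT, NAR.Mclm_apply]
    exact NAR.mfun_Uel (i, j)
  have hfb : ∀ (f : Dual' V) (i : ℕ), ‖f (v i)‖ ≤ ‖f‖ := fun f i =>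
    (f.le_opNorm (v i)).trans (mul_le_of_le_one_right (norm_nonneg f) (hvb i))
  have hgb : ∀ (f : Dual' V) (j : ℕ), ‖f (w j)‖ ≤ ‖f‖ := fun f j =>
    (f.le_opNorm (w j)).trans (mul_le_of_le_one_right (norm_nonneg f) (hwb j))
  let Xlin : Dual' V →ₗ[ℂ] ℂ :=
    { toFun := fun f => NAR.ulim fun i => f (v i)
      map_add' := fun f g => NAR.ulim_eq (by
        simpa only [ContinuousLinearMap.add_apply] using
          (NAR.ulim_spec (hfb f)).add (NAR.ulim_spec (hfb g)))
      map_smul' := fun c f => NAR.ulim_eq (by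
        simpa only [ContinuousLinearMap.coe_smul', Pi.smul_apply, smul_eq_mul,
          RingHom.id_apply] using (NAR.ulim_spec (hfb f)).const_mul c) }
  let X : Bidual V := Xlin.mkContinuous 1 fun f => by
    rw [one_mul]; exact NAR.ulim_norm_le (hfb f)
  let Ylin : Dual' V →ₗ[ℂ] ℂ :=
    { toFun := fun f => NAR.ulim fun j => f (w j)
      map_add' := fun f g => NAR.ulim_eq (by
        simpa only [ContinuousLinearMap.add_apply] using
          (NAR.ulim_spec (hgb f)).add (NAR.ulim_spec (hgb g)))
      map_smul' := fun c f => NAR.ulim_eq (by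
        simpa only [ContinuousLinearMap.coe_smul', Pi.smul_apply, smul_eq_mul,
          RingHom.id_apply] using (NAR.ulim_spec (hgb f)).const_mul c) }
  let Y : Bidual V := Ylin.mkContinuous 1 fun f => by
    rw [one_mul]; exact NAR.ulim_norm_le (hgb f)
  have hXapp : ∀ f : Dual' V, X f = NAR.ulim fun i => f (v i) := fun f => rfl
  have hYapp : ∀ f : Dual' V, Y f = NAR.ulim fun j => f (w j) := fun f => rfl
  have hXmem : X ∈ topCentre V := by rw [hreg]; exact Set.mem_univ X
  have hXcont : WStarContinuous fun Z : Dual' (Dual' V) => arens X Z := hXmem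
  let J : V → Bidual V := fun x => NormedSpace.inclusionInDoubleDual ℂ V x
  have h1 : Tendsto (fun j => StrongDual.toWeakDual (J (w j))) (NAR.U : Filter ℕ)
      (𝓝 (StrongDual.toWeakDual Y)) := by
    rw [tendsto_iff_forall_eval_tendsto_topDualPairing]
    intro f
    have hts := NAR.ulim_spec (hgb f)
    rw [← hYapp f] at hts
    exact hts
  have h2 := (hXcont.tendsto _).comp h1
  have h3 : Tendsto (fun j => arens X (J (w j)) T) (NAR.U : Filter ℕ)
      (𝓝 (arens X Y T)) := ((WeakDual.eval_continuous T).tendsto _).comp h2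
  have hleft : ∀ j, arens X (J (w j)) T = 0 := by
    intro j
    rw [arens_apply, hXapp]
    have he : (fun i => (boxDual (J (w j)) T) (v i)) = fun i => NAR.ind (i, j) := by
      funext i
      rw [boxDual_apply]
      rw [show (J (w j)) (fBoxL T (v i)) = (fBoxL T (v i)) (w j) from
        NormedSpace.dual_def ℂ V (w j) (fBoxL T (v i))]
      rw [fBoxL_apply]
      exact hTvw i j
    rw [he]
    refine NAR.ulim_eventually ?_
    filter_upwards [eventually_ge_atTop (j + 1)] with i hi
    simp only [NAR.ind]
    rw [if_neg (by omega)]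
  have hright : arens X Y T = 1 := by
    rw [arens_apply, hXapp]
    have he : (fun i => (boxDual Y T) (v i)) = fun _ => (1 : ℂ) := by
      funext i
      rw [boxDual_apply, hYapp]
      have he2 : (fun j => (fBoxL T (v i)) (w j)) = fun j => NAR.ind (i, j) := by
        funext j
        rw [fBoxL_apply]
        exact hTvw i j
      rw [he2]
      refine NAR.ulim_eventually ?_
      filter_upwards [eventually_ge_atTop i] with j hj
      simp only [NAR.ind]
      rw [if_pos (by omega)]
    rw [he]
    exact NAR.ulim_eq tendsto_const_nhds
  rw [hright] at h3
  have h4 : Tendsto (fun _ : ℕ => (0 : ℂ)) (NAR.U : Filter ℕ) (𝓝 1) :=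
    Tendsto.congr (fun j => hleft j) h3
  exact one_ne_zero (tendsto_nhds_unique h4 tendsto_const_nhds)


end Paper
end
end
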